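/- arXiv:1408.5801 — 8 statements merged into one kernel-verified Lean document; each statement's English description precedes it below -/
import Mathlib

section
/- Let f : ℝ^n → ℝ be convex and differentiable, g a norm on ℝ^n with dual norm g*, and suppose the gradient ∇f is Lipschitz with respect to the pair (g*, g) with constant L ≥ 0, i.e., g*(∇f(x) − ∇f(y)) ≤ L·g(x − y) for all x, y ∈ ℝ^n. Fix a step size ε > 0, parameter values 0 ≤ t₀ ≤ t, and an integer k ≥ 0 with t = t₀ + k·ε. Let x⁽⁰⁾ be a minimizer of f over {x : g(x) ≤ t₀}, and for i = 1,…,k let x⁽ⁱ⁾ = x⁽ⁱ⁻¹⁾ + Δ⁽ⁱ⁾, where Δ⁽ⁱ⁾ is a minimizer of ⟨∇f(x⁽ⁱ⁻¹⁾), z⟩ over {z : g(z) ≤ ε}. Then for every minimizer x̂ of f over {x : g(x) ≤ t}, f(x⁽ᵏ⁾) − f(x̂) ≤ L·(t² − t₀²) + L·(t − t₀)·ε. -/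
open scoped RealInnerProductSpace BigOperators

section StagewiseAux

variable {n : ℕ}


section gfacts
variable {g : EuclideanSpace ℝ (Fin n) → ℝ}
  (hg_add : ∀ x y, g (x + y) ≤ g x + g y)
  (hg_smul : ∀ (a : ℝ) (x : EuclideanSpace ℝ (Fin n)), g (a • x) = |a| * g x)

include hg_add hg_smul

omit hg_add in theorem gz : g 0 = 0 := by
  have := hg_smul 0 0; simpa using this

omit hg_add in theorem gneg (x : EuclideanSpace ℝ (Fin n)) : g (-x) = g x := by
  have := hg_smul (-1) x; simpa using this

theorem gnonneg (x : EuclideanSpace ℝ (Fin n)) : 0 ≤ g x := by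
  have h0 : g 0 ≤ g x + g (-x) := by
    have := hg_add x (-x); simpa using this
  rw [gz (g:=g) hg_smul, gneg (g:=g) hg_smul] at h0
  linarith

theorem gsum {ι : Type*} (s : Finset ι) (h : ι → EuclideanSpace ℝ (Fin n)) :
    g (∑ i ∈ s, h i) ≤ ∑ i ∈ s, g (h i) := by
  classical
  induction s using Finset.induction with
  | empty => simp [gz hg_smul]
  | @insert a s hx ih =>
    rw [Finset.sum_insert hx, Finset.sum_insert hx]
    exact (hg_add _ _).trans (by linarith)

theorem g_le_norm : ∃ C, 0 ≤ C ∧ ∀ x : EuclideanSpace ℝ (Fin n), g x ≤ C * ‖x‖ := by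
  classical
  refine ⟨∑ i, g (EuclideanSpace.single i (1:ℝ)), Finset.sum_nonneg fun i _ => gnonneg hg_add hg_smul _, fun x => ?_⟩
  have hx : x = ∑ i, x i • EuclideanSpace.single i (1:ℝ) := by
    have := (EuclideanSpace.basisFun (Fin n) ℝ).sum_repr x
    simpa [EuclideanSpace.basisFun_apply, EuclideanSpace.basisFun_repr] using this.symm
  calc g x = g (∑ i, x i • EuclideanSpace.single i (1:ℝ)) := by rw [← hx]
    _ ≤ ∑ i, g (x i • EuclideanSpace.single i (1:ℝ)) := gsum hg_add hg_smul _ _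
    _ = ∑ i, |x i| * g (EuclideanSpace.single i (1:ℝ)) := by simp [hg_smul]
    _ ≤ ∑ i, ‖x‖ * g (EuclideanSpace.single i (1:ℝ)) := by
        refine Finset.sum_le_sum fun i _ => ?_
        refine mul_le_mul_of_nonneg_right ?_ (gnonneg hg_add hg_smul _)
        calc |x i| = |⟪x, EuclideanSpace.single i (1:ℝ)⟫| := by
              rw [EuclideanSpace.inner_single_right]; simp
          _ ≤ ‖x‖ * ‖(EuclideanSpace.single i (1:ℝ) : EuclideanSpace ℝ (Fin n))‖ := abs_real_inner_le_norm _ _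
          _ = ‖x‖ := by rw [EuclideanSpace.norm_single]; simp
    _ = ‖x‖ * ∑ i, g (EuclideanSpace.single i (1:ℝ)) := by rw [← Finset.mul_sum]
    _ = (∑ i, g (EuclideanSpace.single i (1:ℝ))) * ‖x‖ := mul_comm _ _

theorem g_cont : Continuous g := by
  obtain ⟨C, hC0, hC⟩ := g_le_norm hg_add hg_smul
  have : LipschitzWith (Real.toNNReal C) g := by
    refine LipschitzWith.of_dist_le_mul fun a b => ?_
    rw [Real.dist_eq, Real.coe_toNNReal _ hC0, dist_eq_norm]
    rw [abs_sub_le_iff]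
    constructor
    · have h1 : g a ≤ g (a - b) + g b := by
        have := hg_add (a - b) b; simpa using this
      have := hC (a - b); linarith
    · have h1 : g b ≤ g (b - a) + g a := by
        have := hg_add (b - a) a; simpa using this
      have h2 := hC (b - a)
      rw [norm_sub_rev] at h2; linarith
  exact this.continuous

theorem norm_le_g (hg_zero : ∀ x, g x = 0 → x = 0) :
    ∃ c, 0 < c ∧ ∀ x : EuclideanSpace ℝ (Fin n), c * ‖x‖ ≤ g x := by
  by_cases hsph : (Metric.sphere (0 : EuclideanSpace ℝ (Fin n)) 1).Nonempty
  · obtain ⟨z₀, hz₀, hmin⟩ := (isCompact_sphere (0 : EuclideanSpace ℝ (Fin n)) 1).exists_isMinOn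
      hsph ((g_cont hg_add hg_smul).continuousOn)
    have hz₀n : ‖z₀‖ = 1 := by simpa using hz₀
    have hgz₀ : 0 < g z₀ := by
      rcases lt_or_eq_of_le (gnonneg hg_add hg_smul z₀) with h | h
      · exact h
      · exfalso; have := hg_zero z₀ h.symm; rw [this] at hz₀n; simp at hz₀n
    refine ⟨g z₀, hgz₀, fun x => ?_⟩
    rcases eq_or_ne x 0 with rfl | hx
    · simp [gz (g := g) hg_smul]
    · have hnx : (0:ℝ) < ‖x‖ := norm_pos_iff.mpr hx
      have hmem : (‖x‖⁻¹ • x) ∈ Metric.sphere (0 : EuclideanSpace ℝ (Fin n)) 1 := by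
        simp [norm_smul, abs_of_pos (inv_pos.mpr hnx), inv_mul_cancel₀ hnx.ne']
      have hthis : g z₀ ≤ ‖x‖⁻¹ * g x := by
        have h1 : g z₀ ≤ g (‖x‖⁻¹ • x) := hmin hmem
        rwa [hg_smul, abs_of_pos (inv_pos.mpr hnx)] at h1
      calc g z₀ * ‖x‖ ≤ (‖x‖⁻¹ * g x) * ‖x‖ := by
            refine mul_le_mul_of_nonneg_right ?_ hnx.le
            exact hthis
        _ = g x := by field_simp
  · refine ⟨1, one_pos, fun x => ?_⟩
    rcases eq_or_ne x 0 with rfl | hx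
    · simp [gz (g := g) hg_smul]
    · exact absurd ⟨‖x‖⁻¹ • x, by simp [norm_smul, abs_of_pos (inv_pos.mpr (norm_pos_iff.mpr hx)), inv_mul_cancel₀ (norm_pos_iff.mpr hx).ne']⟩ hsph
end gfacts

section dual
variable {g : EuclideanSpace ℝ (Fin n) → ℝ}
  (hg_add : ∀ x y, g (x + y) ≤ g x + g y)
  (hg_smul : ∀ (a : ℝ) (x : EuclideanSpace ℝ (Fin n)), g (a • x) = |a| * g x)
  (hg_zero : ∀ x, g x = 0 → x = 0)
  {gs : EuclideanSpace ℝ (Fin n) → ℝ}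
  (hgs : ∀ v, gs v = sSup {r : ℝ | ∃ z, g z ≤ 1 ∧ ⟪v, z⟫ = r})

include hg_add hg_smul hg_zero hgs

theorem dual_nonempty (v : EuclideanSpace ℝ (Fin n)) :
    {r : ℝ | ∃ z, g z ≤ 1 ∧ ⟪v, z⟫ = r}.Nonempty :=
  ⟨0, 0, by simp [gz (g := g) hg_smul]⟩

theorem dual_bdd (v : EuclideanSpace ℝ (Fin n)) :
    BddAbove {r : ℝ | ∃ z, g z ≤ 1 ∧ ⟪v, z⟫ = r} := by
  obtain ⟨c, hc, hcg⟩ := norm_le_g hg_add hg_smul hg_zero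
  refine ⟨‖v‖ * c⁻¹, fun r hr => ?_⟩
  obtain ⟨z, hz1, rfl⟩ := hr
  have h1 : ‖z‖ ≤ c⁻¹ := by
    have h := (hcg z).trans hz1
    calc ‖z‖ = c⁻¹ * (c * ‖z‖) := by field_simp
      _ ≤ c⁻¹ * 1 := mul_le_mul_of_nonneg_left h (by positivity)
      _ = c⁻¹ := mul_one _
  calc ⟪v, z⟫ ≤ ‖v‖ * ‖z‖ := real_inner_le_norm v z
    _ ≤ ‖v‖ * c⁻¹ := by
      exact mul_le_mul_of_nonneg_left h1 (norm_nonneg v)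

theorem inner_le_gs {z : EuclideanSpace ℝ (Fin n)} (hz : g z ≤ 1)
    (v : EuclideanSpace ℝ (Fin n)) : ⟪v, z⟫ ≤ gs v := by
  rw [hgs]
  exact le_csSup (dual_bdd hg_add hg_smul hg_zero hgs v) ⟨z, hz, rfl⟩

theorem gs_le {v : EuclideanSpace ℝ (Fin n)} {r : ℝ}
    (h : ∀ z, g z ≤ 1 → ⟪v, z⟫ ≤ r) : gs v ≤ r := by
  rw [hgs]
  refine csSup_le (dual_nonempty hg_add hg_smul hg_zero hgs v) ?_
  rintro s ⟨z, hz, rfl⟩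
  exact h z hz

theorem gs_nonneg (v : EuclideanSpace ℝ (Fin n)) : 0 ≤ gs v := by
  have := inner_le_gs hg_add hg_smul hg_zero hgs (z := 0) (by simp [gz (g := g) hg_smul]) v
  simpa using this

theorem inner_le_gs_mul (v w : EuclideanSpace ℝ (Fin n)) : ⟪v, w⟫ ≤ gs v * g w := by
  rcases eq_or_lt_of_le (gnonneg hg_add hg_smul w) with h | h
  · have hw : w = 0 := hg_zero w h.symm
    simp [hw, gz (g := g) hg_smul]
  · have h1 : g ((g w)⁻¹ • w) ≤ 1 := by
      rw [hg_smul, abs_of_pos (inv_pos.mpr h), inv_mul_cancel₀ h.ne']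
    have h2 := inner_le_gs hg_add hg_smul hg_zero hgs h1 v
    rw [real_inner_smul_right] at h2
    calc ⟪v, w⟫ = ((g w)⁻¹ * ⟪v, w⟫) * g w := by field_simp
      _ ≤ gs v * g w := mul_le_mul_of_nonneg_right h2 h.le

theorem gs_add (u v : EuclideanSpace ℝ (Fin n)) : gs (u + v) ≤ gs u + gs v := by
  refine gs_le hg_add hg_smul hg_zero hgs fun z hz => ?_
  rw [inner_add_left]
  exact add_le_add (inner_le_gs hg_add hg_smul hg_zero hgs hz u)
    (inner_le_gs hg_add hg_smul hg_zero hgs hz v)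
end dual

section calc1
variable {f : EuclideanSpace ℝ (Fin n) → ℝ}
  {f' : EuclideanSpace ℝ (Fin n) → EuclideanSpace ℝ (Fin n)}
  (hf_diff : ∀ x, HasGradientAt f (f' x) x)

include hf_diff

theorem line_deriv (a d : EuclideanSpace ℝ (Fin n)) (s₀ : ℝ) :
    HasDerivAt (fun s : ℝ => f (a + s • d)) ⟪f' (a + s₀ • d), d⟫ s₀ := by
  have hc : HasDerivAt (fun s : ℝ => a + s • d) d s₀ := by
    simpa using ((hasDerivAt_id s₀).smul_const d).const_add a
  have hf := (hf_diff (a + s₀ • d)).hasFDerivAt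
  have := hf.comp_hasDerivAt s₀ hc
  simpa [InnerProductSpace.toDual_apply_apply, Function.comp_def] using this

theorem grad_lower (hf_conv : ConvexOn ℝ Set.univ f) (a b : EuclideanSpace ℝ (Fin n)) :
    f a + ⟪f' a, b - a⟫ ≤ f b := by
  set d := b - a with hd
  have hφ : ConvexOn ℝ Set.univ (fun s : ℝ => f (a + s • d)) := by
    have := hf_conv.comp_affineMap (AffineMap.lineMap a b)
    have heq : ∀ s : ℝ, (f ∘ (AffineMap.lineMap a b)) s = f (a + s • d) := by
      intro s; simp only [Function.comp_apply, AffineMap.lineMap_apply, hd, vsub_eq_sub, vadd_eq_add]; rw [add_comm]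
    have hfun : (fun s : ℝ => f (a + s • d)) = f ∘ (AffineMap.lineMap a b) := funext fun s => (heq s).symm
    rw [hfun]
    simpa using this
  have hder := line_deriv hf_diff a d 0
  have h01 : (0:ℝ) < 1 := one_pos
  have := hφ.le_slope_of_hasDerivAt (Set.mem_univ (0:ℝ)) (Set.mem_univ (1:ℝ)) h01 (by simpa using hder)
  rw [slope_def_field] at this
  simp only [zero_smul, add_zero, one_smul] at this
  have hb : a + d = b := by rw [hd]; abel
  rw [hb] at this
  have : ⟪f' a, d⟫ ≤ f b - f a := by
    simpa [div_one] using this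
  linarith

theorem smooth_upper {g : EuclideanSpace ℝ (Fin n) → ℝ}
    (hg_add : ∀ x y, g (x + y) ≤ g x + g y)
    (hg_smul : ∀ (a : ℝ) (x : EuclideanSpace ℝ (Fin n)), g (a • x) = |a| * g x)
    (hg_zero : ∀ x, g x = 0 → x = 0)
    {gs : EuclideanSpace ℝ (Fin n) → ℝ}
    (hgs : ∀ v, gs v = sSup {r : ℝ | ∃ z, g z ≤ 1 ∧ ⟪v, z⟫ = r})
    {L : ℝ} (hL : 0 ≤ L)
    (hLip : ∀ x y, gs (f' x - f' y) ≤ L * g (x - y))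
    (a b : EuclideanSpace ℝ (Fin n)) :
    f b ≤ f a + ⟪f' a, b - a⟫ + L / 2 * (g (b - a)) ^ 2 := by
  set d := b - a with hd
  set B := ⟪f' a, d⟫ with hB
  set K := L * (g d) ^ 2 with hK
  set ψ := fun s : ℝ => f a + s * B + K / 2 * s ^ 2 - f (a + s • d) with hψ
  have hψder : ∀ s : ℝ, HasDerivAt ψ
      (B + K / 2 * (2 * s ^ 1) - ⟪f' (a + s • d), d⟫) s := by
    intro s
    have h1 : HasDerivAt (fun u : ℝ => f a + u * B) B s := by
      simpa using ((hasDerivAt_id s).mul_const B).const_add (f a)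
    have h2 : HasDerivAt (fun u : ℝ => K / 2 * u ^ 2) (K / 2 * (2 * s ^ 1)) s :=
      (hasDerivAt_pow 2 s).const_mul (K / 2)
    exact (h1.add h2).sub (line_deriv hf_diff a d s)
  have hmono : MonotoneOn ψ (Set.Icc (0:ℝ) 1) := by
    refine monotoneOn_of_deriv_nonneg (convex_Icc 0 1) ?_ ?_ ?_
    · exact Continuous.continuousOn (by
        have : ∀ s, HasDerivAt ψ _ s := hψder
        exact (fun s => (hψder s).differentiableAt) |> Differentiable.continuous)
    · intro s hs
      exact ((hψder s).differentiableAt).differentiableWithinAt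
    · intro s hs
      rw [interior_Icc] at hs
      rw [(hψder s).deriv]
      have hkey : ⟪f' (a + s • d), d⟫ - B ≤ K * s := by
        have h1 : ⟪f' (a + s • d) - f' a, d⟫ ≤ gs (f' (a + s • d) - f' a) * g d :=
          inner_le_gs_mul hg_add hg_smul hg_zero hgs _ _
        have h2 : gs (f' (a + s • d) - f' a) ≤ L * g (s • d) := by
          have := hLip (a + s • d) a
          simpa using this
        have h3 : g (s • d) = s * g d := by
          rw [hg_smul, abs_of_pos hs.1]
        have h4 : gs (f' (a + s • d) - f' a) * g d ≤ (L * (s * g d)) * g d := by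
          refine mul_le_mul_of_nonneg_right ?_ (gnonneg hg_add hg_smul d)
          rw [← h3]; exact h2
        rw [inner_sub_left] at h1
        have : (L * (s * g d)) * g d = K * s := by rw [hK]; ring
        linarith
      nlinarith [hkey]
  have h01 := hmono (Set.mem_Icc.mpr ⟨le_refl 0, zero_le_one⟩)
    (Set.mem_Icc.mpr ⟨zero_le_one, le_refl 1⟩) zero_le_one
  have hψ0 : ψ 0 = 0 := by simp [hψ]
  have hψ1 : ψ 1 = f a + B + K / 2 - f b := by
    have hb : a + d = b := by rw [hd]; abel
    simp only [hψ, one_mul, one_pow, one_smul, hb, mul_one]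
  rw [hψ0, hψ1] at h01
  have : K / 2 = L / 2 * (g d) ^ 2 := by rw [hK]; ring
  linarith
end calc1

theorem exists_min {g : EuclideanSpace ℝ (Fin n) → ℝ}
    (hg_add : ∀ x y, g (x + y) ≤ g x + g y)
    (hg_smul : ∀ (a : ℝ) (x : EuclideanSpace ℝ (Fin n)), g (a • x) = |a| * g x)
    (hg_zero : ∀ x, g x = 0 → x = 0)
    {f : EuclideanSpace ℝ (Fin n) → ℝ} (hf_cont : Continuous f)
    (r : ℝ) (hr : 0 ≤ r) :
    ∃ m, g m ≤ r ∧ ∀ y, g y ≤ r → f m ≤ f y := by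
  obtain ⟨c, hc, hcg⟩ := norm_le_g hg_add hg_smul hg_zero
  have hclosed : IsClosed {y : EuclideanSpace ℝ (Fin n) | g y ≤ r} :=
    isClosed_le (g_cont hg_add hg_smul) continuous_const
  have hbdd : Bornology.IsBounded {y : EuclideanSpace ℝ (Fin n) | g y ≤ r} := by
    refine (Metric.isBounded_iff_subset_closedBall 0).mpr ⟨r / c, fun y hy => ?_⟩
    simp only [Metric.mem_closedBall, dist_zero_right]
    have h1 := hcg y
    have h2 : g y ≤ r := hy
    rw [le_div_iff₀ hc]
    linarith [mul_comm c ‖y‖]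
  have hcompact : IsCompact {y : EuclideanSpace ℝ (Fin n) | g y ≤ r} :=
    Metric.isCompact_of_isClosed_isBounded hclosed hbdd
  have hne : {y : EuclideanSpace ℝ (Fin n) | g y ≤ r}.Nonempty :=
    ⟨0, by simp [Set.mem_setOf_eq, gz (g := g) hg_smul, hr]⟩
  obtain ⟨m, hm, hmin⟩ := hcompact.exists_isMinOn hne hf_cont.continuousOn
  exact ⟨m, hm, fun y hy => hmin hy⟩

set_option maxHeartbeats 1000000 in
theorem stagewise_suboptimality' {n : ℕ}
    (f : EuclideanSpace ℝ (Fin n) → ℝ)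
    (f' : EuclideanSpace ℝ (Fin n) → EuclideanSpace ℝ (Fin n))
    (hf_conv : ConvexOn ℝ Set.univ f)
    (hf_diff : ∀ x, HasGradientAt f (f' x) x)
    (g : EuclideanSpace ℝ (Fin n) → ℝ)
    (hg_add : ∀ x y, g (x + y) ≤ g x + g y)
    (hg_smul : ∀ (a : ℝ) (x : EuclideanSpace ℝ (Fin n)), g (a • x) = |a| * g x)
    (hg_zero : ∀ x, g x = 0 → x = 0)
    (gs : EuclideanSpace ℝ (Fin n) → ℝ)
    (hgs : ∀ v, gs v = sSup {r : ℝ | ∃ z, g z ≤ 1 ∧ ⟪v, z⟫ = r})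
    (L : ℝ) (hL : 0 ≤ L)
    (hLip : ∀ x y, gs (f' x - f' y) ≤ L * g (x - y))
    (ε : ℝ) (hε : 0 < ε)
    (t₀ t : ℝ) (ht₀ : 0 ≤ t₀) (ht₀t : t₀ ≤ t)
    (k : ℕ) (htk : t = t₀ + k * ε)
    (x : ℕ → EuclideanSpace ℝ (Fin n)) (Δ : ℕ → EuclideanSpace ℝ (Fin n))
    (hx0_feas : g (x 0) ≤ t₀)
    (hx0_min : ∀ y, g y ≤ t₀ → f (x 0) ≤ f y)
    (hupd : ∀ i, 1 ≤ i → i ≤ k → x i = x (i - 1) + Δ i)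
    (hΔ_feas : ∀ i, 1 ≤ i → i ≤ k → g (Δ i) ≤ ε)
    (hΔ_min : ∀ i, 1 ≤ i → i ≤ k → ∀ z, g z ≤ ε →
      ⟪f' (x (i - 1)), Δ i⟫ ≤ ⟪f' (x (i - 1)), z⟫)
    (xhat : EuclideanSpace ℝ (Fin n))
    (hxhat_feas : g xhat ≤ t) (hxhat_min : ∀ y, g y ≤ t → f xhat ≤ f y) :
    f (x k) - f xhat ≤ L * (t ^ 2 - t₀ ^ 2) + L * (t - t₀) * ε := by
  have hf_cont : Continuous f :=
    Differentiable.continuous (fun x0 => (hf_diff x0).hasFDerivAt.differentiableAt)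
  have key : ∀ i : ℕ, i ≤ k →
      g (x i) ≤ t₀ + i * ε ∧
      ∀ m, g m ≤ t₀ + i * ε → (∀ y, g y ≤ t₀ + i * ε → f m ≤ f y) →
        f (x i) - f m ≤ L * ((t₀ + i * ε) ^ 2 - t₀ ^ 2) + L * (i * ε) * ε := by
    intro i
    induction i with
    | zero =>
      intro _
      refine ⟨by simpa using hx0_feas, fun m hm hmmin => ?_⟩
      have h1 : f (x 0) ≤ f m := hx0_min m (by simpa using hm)
      simp only [Nat.cast_zero, zero_mul, add_zero]
      have : L * ((t₀) ^ 2 - t₀ ^ 2) + L * 0 * ε = 0 := by ring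
      linarith
    | succ i ih =>
      intro hik
      have hik' : i ≤ k := le_trans (Nat.le_succ i) hik
      obtain ⟨hfeas, hbound⟩ := ih hik'
      set r' : ℝ := t₀ + i * ε with hr'
      have hrr' : t₀ + ((i+1 : ℕ) : ℝ) * ε = r' + ε := by rw [hr']; push_cast; ring
      set r : ℝ := r' + ε with hrr
      rw [hrr']
      have hr'0 : 0 ≤ r' := by
        rw [hr']; positivity
      have hr0 : 0 < r := by rw [hrr]; linarith
      have hupd' : x (i+1) = x i + Δ (i+1) := by
        have := hupd (i+1) (by omega) hik
        simpa using this
      have hΔf : g (Δ (i+1)) ≤ ε := hΔ_feas (i+1) (by omega) hik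
      have hfeas' : g (x (i+1)) ≤ r := by
        rw [hupd', hrr]
        calc g (x i + Δ (i+1)) ≤ g (x i) + g (Δ (i+1)) := hg_add _ _
          _ ≤ r' + ε := add_le_add hfeas hΔf
      refine ⟨hfeas', fun m hm hmmin => ?_⟩
      obtain ⟨m', hm'feas, hm'min⟩ := exists_min hg_add hg_smul hg_zero hf_cont r' hr'0
      have IH := hbound m' hm'feas hm'min
      set G := gs (f' (x i)) with hG
      -- smoothness step
      have hsm := smooth_upper hf_diff hg_add hg_smul hg_zero hgs hL hLip (x i) (x (i+1))
      have hxd : x (i+1) - x i = Δ (i+1) := by rw [hupd']; abel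
      rw [hxd] at hsm
      have hsm2 : f (x (i+1)) ≤ f (x i) + ⟪f' (x i), Δ (i+1)⟫ + L / 2 * ε ^ 2 := by
        have hh : L / 2 * g (Δ (i+1)) ^ 2 ≤ L / 2 * ε ^ 2 := by
          refine mul_le_mul_of_nonneg_left ?_ (by linarith)
          exact pow_le_pow_left₀ (gnonneg hg_add hg_smul _) hΔf 2
        linarith
      -- descent step
      have hdesc : ⟪f' (x i), Δ (i+1)⟫ ≤ -(ε * G) := by
        have hGle : G ≤ -⟪f' (x i), Δ (i+1)⟫ / ε := by
          rw [hG]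
          refine gs_le hg_add hg_smul hg_zero hgs fun z hz => ?_
          have hz' : g ((-ε) • z) ≤ ε := by
            rw [hg_smul, abs_neg, abs_of_pos hε]
            nlinarith [gnonneg hg_add hg_smul z]
          have hmin2 := hΔ_min (i+1) (by omega) hik ((-ε) • z) hz'
          simp only [Nat.add_sub_cancel] at hmin2
          rw [real_inner_smul_right] at hmin2
          rw [le_div_iff₀ hε]
          linarith
        rw [le_div_iff₀ hε] at hGle
        linarith [mul_comm G ε]
      -- compare minimizers
      have hm'm : f m' ≤ f m + ε * gs (f' m) + L / 2 * ε ^ 2 := by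
        set u := (r'/r) • m with hu
        have hgu : g u ≤ r' := by
          rw [hu, hg_smul, abs_of_nonneg (div_nonneg hr'0 hr0.le)]
          calc (r'/r) * g m ≤ (r'/r) * r :=
              mul_le_mul_of_nonneg_left hm (div_nonneg hr'0 hr0.le)
            _ = r' := by field_simp
        have h5 : f m' ≤ f u := hm'min u hgu
        have h6 := smooth_upper hf_diff hg_add hg_smul hg_zero hgs hL hLip m u
        have hum : u - m = (r'/r - 1) • m := by rw [hu, sub_smul, one_smul]
        have hgum : g (u - m) ≤ ε := by
          rw [hum, hg_smul, abs_of_nonpos (by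
            have : r'/r ≤ 1 := by
              rw [div_le_one hr0]; linarith
            linarith)]
          have heq : -(r'/r - 1) = ε / r := by field_simp; rw [hrr]; ring
          rw [heq]
          calc ε / r * g m ≤ ε / r * r :=
              mul_le_mul_of_nonneg_left hm (div_nonneg hε.le hr0.le)
            _ = ε := by field_simp
        have h7 : ⟪f' m, u - m⟫ ≤ gs (f' m) * ε := by
          calc ⟪f' m, u - m⟫ ≤ gs (f' m) * g (u - m) :=
              inner_le_gs_mul hg_add hg_smul hg_zero hgs _ _
            _ ≤ gs (f' m) * ε :=
              mul_le_mul_of_nonneg_left hgum (gs_nonneg hg_add hg_smul hg_zero hgs _)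
        have h8 : L / 2 * (g (u - m)) ^ 2 ≤ L / 2 * ε ^ 2 := by
          refine mul_le_mul_of_nonneg_left ?_ (by linarith)
          exact pow_le_pow_left₀ (gnonneg hg_add hg_smul _) hgum 2
        linarith [mul_comm (gs (f' m)) ε]
      -- Lipschitz comparison of gradients
      have h9 : gs (f' m) ≤ G + L * (r + r') := by
        have ha : f' m = f' (x i) + (f' m - f' (x i)) := by abel
        have hb : gs (f' m) ≤ G + gs (f' m - f' (x i)) := by
          rw [hG]
          calc gs (f' m) = gs (f' (x i) + (f' m - f' (x i))) := by rw [← ha]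
            _ ≤ _ := gs_add hg_add hg_smul hg_zero hgs _ _
        have hc : gs (f' m - f' (x i)) ≤ L * g (m - x i) := hLip m (x i)
        have hd : g (m - x i) ≤ r + r' := by
          have : g (m - x i) ≤ g m + g (- x i) := by
            have := hg_add m (- x i); simpa [sub_eq_add_neg] using this
          rw [gneg (g := g) hg_smul] at this
          linarith
        have he : L * g (m - x i) ≤ L * (r + r') := mul_le_mul_of_nonneg_left hd hL
        linarith
      -- combine everything
      have hfinal : f (x (i+1)) - f m ≤
          (L * (r' ^ 2 - t₀ ^ 2) + L * (↑i * ε) * ε) + L * ε * (r + r') + L * ε ^ 2 := by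
        have h10 : ε * gs (f' m) ≤ ε * (G + L * (r + r')) :=
          mul_le_mul_of_nonneg_left h9 hε.le
        have h10' : ε * (G + L * (r + r')) = ε * G + L * ε * (r + r') := by ring
        have h11 : L / 2 * ε ^ 2 + L / 2 * ε ^ 2 = L * ε ^ 2 := by ring
        linarith
      have hid : L * (r ^ 2 - t₀ ^ 2) + L * (((i+1 : ℕ) : ℝ) * ε) * ε =
          (L * (r' ^ 2 - t₀ ^ 2) + L * (↑i * ε) * ε) + L * ε * (r + r') + L * ε ^ 2 := by
        rw [hrr, hr']; push_cast; ring
      rw [hid]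
      exact hfinal
  have hk := (key k le_rfl).2 xhat (by rw [← htk]; exact hxhat_feas)
    (fun y hy => hxhat_min y (by rw [htk]; exact hy))
  have h1 : t₀ + (k : ℝ) * ε = t := htk.symm
  have h2 : (k : ℝ) * ε = t - t₀ := by rw [htk]; ring
  rw [h1, h2] at hk
  exact hk

end StagewiseAux

/-- General stagewise suboptimality bound (Theorem 1 of the paper). -/
theorem stagewise_suboptimality {n : ℕ}
    (f : EuclideanSpace ℝ (Fin n) → ℝ)
    (f' : EuclideanSpace ℝ (Fin n) → EuclideanSpace ℝ (Fin n))
    (hf_conv : ConvexOn ℝ Set.univ f)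
    (hf_diff : ∀ x, HasGradientAt f (f' x) x)
    (g : EuclideanSpace ℝ (Fin n) → ℝ)
    (hg_add : ∀ x y, g (x + y) ≤ g x + g y)
    (hg_smul : ∀ (a : ℝ) (x : EuclideanSpace ℝ (Fin n)), g (a • x) = |a| * g x)
    (hg_zero : ∀ x, g x = 0 → x = 0)
    (gs : EuclideanSpace ℝ (Fin n) → ℝ)
    (hgs : ∀ v, gs v = sSup {r : ℝ | ∃ z, g z ≤ 1 ∧ ⟪v, z⟫ = r})
    (L : ℝ) (hL : 0 ≤ L)
    (hLip : ∀ x y, gs (f' x - f' y) ≤ L * g (x - y))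
    (ε : ℝ) (hε : 0 < ε)
    (t₀ t : ℝ) (ht₀ : 0 ≤ t₀) (ht₀t : t₀ ≤ t)
    (k : ℕ) (htk : t = t₀ + k * ε)
    (x : ℕ → EuclideanSpace ℝ (Fin n)) (Δ : ℕ → EuclideanSpace ℝ (Fin n))
    (hx0_feas : g (x 0) ≤ t₀)
    (hx0_min : ∀ y, g y ≤ t₀ → f (x 0) ≤ f y)
    (hupd : ∀ i, 1 ≤ i → i ≤ k → x i = x (i - 1) + Δ i)
    (hΔ_feas : ∀ i, 1 ≤ i → i ≤ k → g (Δ i) ≤ ε)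
    (hΔ_min : ∀ i, 1 ≤ i → i ≤ k → ∀ z, g z ≤ ε →
      ⟪f' (x (i - 1)), Δ i⟫ ≤ ⟪f' (x (i - 1)), z⟫)
    (xhat : EuclideanSpace ℝ (Fin n))
    (hxhat_feas : g xhat ≤ t) (hxhat_min : ∀ y, g y ≤ t → f xhat ≤ f y) :
    f (x k) - f xhat ≤ L * (t ^ 2 - t₀ ^ 2) + L * (t - t₀) * ε := by
  exact stagewise_suboptimality' f f' hf_conv hf_diff g hg_add hg_smul hg_zero gs hgs
    L hL hLip ε hε t₀ t ht₀ ht₀t k htk x Δ hx0_feas hx0_min hupd hΔ_feas hΔ_min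
    xhat hxhat_feas hxhat_min
end

section
/- Let f : ℝ^n → ℝ be differentiable, g a norm on ℝ^n with dual norm g*, and suppose g*(∇f(x) − ∇f(y)) ≤ L·g(x − y) for all x, y ∈ ℝ^n, with L ≥ 0. Fix ε > 0, t₀ ≥ 0, set t_i = t₀ + i·ε, and let x⁽⁰⁾ satisfy ⟨∇f(x⁽⁰⁾), x⁽⁰⁾⟩ + t₀·g*(∇f(x⁽⁰⁾)) = 0 and g(x⁽⁰⁾) ≤ t₀. For i = 1,…,k let x⁽ⁱ⁾ = x⁽ⁱ⁻¹⁾ + Δ⁽ⁱ⁾ with g(Δ⁽ⁱ⁾) ≤ ε and ⟨∇f(x⁽ⁱ⁻¹⁾), Δ⁽ⁱ⁾⟩ = −ε·g*(∇f(x⁽ⁱ⁻¹⁾)). Then the duality gap satisfies h_{t_k}(x⁽ᵏ⁾) = ⟨∇f(x⁽ᵏ⁾), x⁽ᵏ⁾⟩ + t_k·g*(∇f(x⁽ᵏ⁾)) ≤ 2Lε·Σ_{i=1}^k t_i = L·ε²·k·(k + 1) + 2L·ε·k·t₀. -/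
open scoped RealInnerProductSpace BigOperators

private lemma sum_Icc_succ_top' (t₀ ε : ℝ) (i : ℕ) :
    ∑ j ∈ Finset.Icc 1 (i + 1), (t₀ + (j : ℝ) * ε) =
      (∑ j ∈ Finset.Icc 1 i, (t₀ + (j : ℝ) * ε)) + (t₀ + ((i : ℝ) + 1) * ε) := by
  have h : Finset.Icc 1 (i + 1) = insert (i + 1) (Finset.Icc 1 i) := by
    ext j; simp [Finset.mem_Icc, Finset.mem_insert]; omega
  rw [h, Finset.sum_insert (by simp)]
  push_cast; ring

private lemma sum_Icc_eval (t₀ ε : ℝ) (k : ℕ) :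
    ∑ i ∈ Finset.Icc 1 k, (t₀ + (i : ℝ) * ε) = k * t₀ + ε * k * (k + 1) / 2 := by
  induction k with
  | zero => simp
  | succ k ih =>
    rw [sum_Icc_succ_top', ih]
    push_cast; ring

/-- Duality gap bound for the general stagewise iterates (proof of Theorem 1). -/
theorem stagewise_duality_gap_bound {n : ℕ}
    (f : EuclideanSpace ℝ (Fin n) → ℝ)
    (f' : EuclideanSpace ℝ (Fin n) → EuclideanSpace ℝ (Fin n))
    (hf_diff : ∀ x, HasGradientAt f (f' x) x)
    (g : EuclideanSpace ℝ (Fin n) → ℝ)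
    (hg_add : ∀ x y, g (x + y) ≤ g x + g y)
    (hg_smul : ∀ (a : ℝ) (x : EuclideanSpace ℝ (Fin n)), g (a • x) = |a| * g x)
    (hg_zero : ∀ x, g x = 0 → x = 0)
    (gs : EuclideanSpace ℝ (Fin n) → ℝ)
    (hgs : ∀ v, gs v = sSup {r : ℝ | ∃ z, g z ≤ 1 ∧ ⟪v, z⟫ = r})
    (L : ℝ) (hL : 0 ≤ L)
    (hLip : ∀ x y, gs (f' x - f' y) ≤ L * g (x - y))
    (ε : ℝ) (hε : 0 < ε)
    (t₀ : ℝ) (ht₀ : 0 ≤ t₀)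
    (k : ℕ)
    (x : ℕ → EuclideanSpace ℝ (Fin n)) (Δ : ℕ → EuclideanSpace ℝ (Fin n))
    (hx0_feas : g (x 0) ≤ t₀)
    (hx0_gap : ⟪f' (x 0), x 0⟫ + t₀ * gs (f' (x 0)) = 0)
    (hupd : ∀ i, 1 ≤ i → i ≤ k → x i = x (i - 1) + Δ i)
    (hΔ_feas : ∀ i, 1 ≤ i → i ≤ k → g (Δ i) ≤ ε)
    (hΔ_min : ∀ i, 1 ≤ i → i ≤ k →
      ⟪f' (x (i - 1)), Δ i⟫ = -(ε * gs (f' (x (i - 1))))) :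
    ⟪f' (x k), x k⟫ + (t₀ + k * ε) * gs (f' (x k)) ≤
      2 * L * ε * ∑ i ∈ Finset.Icc 1 k, (t₀ + (i : ℝ) * ε) ∧
    2 * L * ε * ∑ i ∈ Finset.Icc 1 k, (t₀ + (i : ℝ) * ε) =
      L * ε ^ 2 * k * (k + 1) + 2 * L * ε * k * t₀ := by
  classical
  -- basic properties of the norm g
  have g_zero : g 0 = 0 := by
    have h := hg_smul 0 0
    simpa using h
  have g_neg : ∀ z, g (-z) = g z := by
    intro z
    have h := hg_smul (-1) z
    simpa using h
  have g_nonneg : ∀ z, 0 ≤ g z := by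
    intro z
    have h := hg_add z (-z)
    rw [add_neg_cancel, g_zero, g_neg] at h
    linarith
  have g_pos : ∀ z, z ≠ 0 → 0 < g z := fun z hz =>
    lt_of_le_of_ne (g_nonneg z) fun h => hz (hg_zero z h.symm)
  -- upper bound: g z ≤ C * ‖z‖
  obtain ⟨C, hC0, hC⟩ : ∃ C, 0 ≤ C ∧ ∀ z, g z ≤ C * ‖z‖ := by
    refine ⟨∑ i : Fin n, g (EuclideanSpace.single i 1),
      Finset.sum_nonneg fun i _ => g_nonneg _, fun z => ?_⟩
    have hz : z = ∑ i : Fin n, z i • EuclideanSpace.single i (1 : ℝ) := by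
      have h := (EuclideanSpace.basisFun (Fin n) ℝ).sum_repr z
      simp only [EuclideanSpace.basisFun_repr, EuclideanSpace.basisFun_apply] at h
      exact h.symm
    calc g z = g (∑ i : Fin n, z i • EuclideanSpace.single i (1 : ℝ)) := by rw [← hz]
      _ ≤ ∑ i : Fin n, g (z i • EuclideanSpace.single i (1 : ℝ)) :=
          Finset.le_sum_of_subadditive g g_zero.le hg_add _ _
      _ ≤ ∑ i : Fin n, g (EuclideanSpace.single i (1 : ℝ)) * ‖z‖ := by
          refine Finset.sum_le_sum fun i _ => ?_
          rw [hg_smul]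
          have h1 : |z i| ≤ ‖z‖ := by
            have h2 := abs_real_inner_le_norm (EuclideanSpace.single i (1 : ℝ)) z
            simpa [EuclideanSpace.inner_single_left, EuclideanSpace.norm_single] using h2
          calc |z i| * g (EuclideanSpace.single i (1 : ℝ))
              ≤ ‖z‖ * g (EuclideanSpace.single i (1 : ℝ)) :=
                mul_le_mul_of_nonneg_right h1 (g_nonneg _)
            _ = g (EuclideanSpace.single i (1 : ℝ)) * ‖z‖ := mul_comm _ _
      _ = (∑ i : Fin n, g (EuclideanSpace.single i (1 : ℝ))) * ‖z‖ := by
          rw [Finset.sum_mul]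
  -- g is continuous
  have g_cont : Continuous g := by
    have hlip : LipschitzWith (Real.toNNReal C) g := by
      refine LipschitzWith.of_dist_le_mul fun a b => ?_
      have h1 : g a - g b ≤ g (a - b) := by
        have h := hg_add (a - b) b
        rw [sub_add_cancel] at h
        linarith
      have h2 : g b - g a ≤ g (a - b) := by
        have h := hg_add (b - a) a
        rw [sub_add_cancel] at h
        have h3 : g (b - a) = g (a - b) := by rw [← neg_sub a b, g_neg]
        linarith
      calc dist (g a) (g b) = |g a - g b| := Real.dist_eq _ _
        _ ≤ g (a - b) := abs_sub_le_iff.2 ⟨h1, h2⟩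
        _ ≤ C * ‖a - b‖ := hC _
        _ ≤ Real.toNNReal C * dist a b := by
            rw [dist_eq_norm]
            exact mul_le_mul_of_nonneg_right (Real.le_coe_toNNReal C) (norm_nonneg _)
    exact hlip.continuous
  -- lower bound: m * ‖z‖ ≤ g z with m > 0
  obtain ⟨m, hm0, hm⟩ : ∃ m, 0 < m ∧ ∀ z, m * ‖z‖ ≤ g z := by
    rcases Nat.eq_zero_or_pos n with hn | hn
    · refine ⟨1, one_pos, fun z => ?_⟩
      haveI : Subsingleton (EuclideanSpace ℝ (Fin n)) := by
        subst hn; infer_instance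
      have hz : z = 0 := Subsingleton.elim z 0
      rw [hz]
      simpa using g_nonneg (0 : EuclideanSpace ℝ (Fin n))
    · haveI : Nontrivial (EuclideanSpace ℝ (Fin n)) := by
        refine ⟨EuclideanSpace.single ⟨0, hn⟩ (1 : ℝ), 0, fun h => ?_⟩
        have h2 := congrArg norm h
        simp [EuclideanSpace.norm_single] at h2
      have hsne : (Metric.sphere (0 : EuclideanSpace ℝ (Fin n)) 1).Nonempty :=
        NormedSpace.sphere_nonempty.2 zero_le_one
      obtain ⟨z₀, hz₀mem, hz₀min⟩ :=
        (isCompact_sphere (0 : EuclideanSpace ℝ (Fin n)) 1).exists_isMinOn hsne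
          g_cont.continuousOn
      have hz₀ : ‖z₀‖ = 1 := by simpa using hz₀mem
      have hz₀ne : z₀ ≠ 0 := by
        intro h; rw [h] at hz₀; simp at hz₀
      refine ⟨g z₀, g_pos z₀ hz₀ne, fun z => ?_⟩
      rcases eq_or_ne z 0 with rfl | hz
      · simp [g_zero]
      · have hpos : (0 : ℝ) < ‖z‖ := norm_pos_iff.2 hz
        have hmem : (‖z‖⁻¹ • z) ∈ Metric.sphere (0 : EuclideanSpace ℝ (Fin n)) 1 := by
          simp [norm_smul, abs_of_nonneg (inv_nonneg.2 (norm_nonneg z)),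
            inv_mul_cancel₀ hpos.ne']
        have hle : g z₀ ≤ g (‖z‖⁻¹ • z) := hz₀min hmem
        rw [hg_smul, abs_of_nonneg (inv_nonneg.2 (norm_nonneg z))] at hle
        have h2 : (‖z‖⁻¹ * g z) * ‖z‖ = g z := by field_simp
        nlinarith [mul_le_mul_of_nonneg_right hle hpos.le]
  -- properties of the dual norm gs
  have hSbdd : ∀ v, BddAbove {r : ℝ | ∃ z, g z ≤ 1 ∧ ⟪v, z⟫ = r} := by
    intro v
    refine ⟨‖v‖ * m⁻¹, fun r hr => ?_⟩
    obtain ⟨z, hz1, rfl⟩ := hr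
    have h1 : ‖z‖ ≤ m⁻¹ := by
      have h2 : m * ‖z‖ ≤ 1 := (hm z).trans hz1
      rw [← one_div, le_div_iff₀ hm0]
      nlinarith
    calc ⟪v, z⟫ ≤ ‖v‖ * ‖z‖ := real_inner_le_norm v z
      _ ≤ ‖v‖ * m⁻¹ := mul_le_mul_of_nonneg_left h1 (norm_nonneg v)
  have hSmem0 : ∀ v, (0 : ℝ) ∈ {r : ℝ | ∃ z, g z ≤ 1 ∧ ⟪v, z⟫ = r} := by
    intro v
    exact ⟨0, by simp [g_zero], by simp⟩
  have gs_nonneg : ∀ v, 0 ≤ gs v := by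
    intro v
    rw [hgs]
    exact le_csSup (hSbdd v) (hSmem0 v)
  have gs_inner : ∀ v z, ⟪v, z⟫ ≤ gs v * g z := by
    intro v z
    rcases eq_or_ne z 0 with rfl | hz
    · simp [g_zero]
    · have hgz : 0 < g z := g_pos z hz
      have hmem : ⟪v, (g z)⁻¹ • z⟫ ∈ {r : ℝ | ∃ w, g w ≤ 1 ∧ ⟪v, w⟫ = r} := by
        refine ⟨(g z)⁻¹ • z, ?_, rfl⟩
        rw [hg_smul, abs_of_nonneg (inv_nonneg.2 hgz.le), inv_mul_cancel₀ hgz.ne']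
      have hle : ⟪v, (g z)⁻¹ • z⟫ ≤ gs v := by
        rw [hgs]; exact le_csSup (hSbdd v) hmem
      rw [real_inner_smul_right] at hle
      have h2 : ((g z)⁻¹ * ⟪v, z⟫) * g z = ⟪v, z⟫ := by field_simp
      nlinarith [mul_le_mul_of_nonneg_right hle hgz.le]
  have gs_tri : ∀ v w, gs w ≤ gs v + gs (w - v) := by
    intro v w
    rw [hgs w]
    refine csSup_le ⟨0, hSmem0 w⟩ fun r hr => ?_
    obtain ⟨z, hz1, rfl⟩ := hr
    have h1 : ⟪v, z⟫ ≤ gs v := by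
      have := gs_inner v z
      nlinarith [gs_nonneg v, g_nonneg z]
    have h2 : ⟪w - v, z⟫ ≤ gs (w - v) := by
      have := gs_inner (w - v) z
      nlinarith [gs_nonneg (w - v), g_nonneg z]
    have h3 : ⟪w, z⟫ = ⟪v, z⟫ + ⟪w - v, z⟫ := by
      rw [inner_sub_left]; ring
    linarith
  -- main induction
  have key : ∀ i, i ≤ k → g (x i) ≤ t₀ + i * ε ∧
      ⟪f' (x i), x i⟫ + (t₀ + i * ε) * gs (f' (x i)) ≤
        2 * L * ε * ∑ j ∈ Finset.Icc 1 i, (t₀ + (j : ℝ) * ε) := by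
    intro i
    induction i with
    | zero =>
      intro _
      have hIcc : Finset.Icc 1 0 = (∅ : Finset ℕ) := by simp
      constructor
      · simpa using hx0_feas
      · simp only [Nat.cast_zero, zero_mul, add_zero, hIcc, Finset.sum_empty, mul_zero]
        exact le_of_eq hx0_gap
    | succ i ih =>
      intro hik
      obtain ⟨hfeas, hgap⟩ := ih (by omega)
      have hup := hupd (i + 1) (by omega) hik
      have hdf := hΔ_feas (i + 1) (by omega) hik
      have hdm := hΔ_min (i + 1) (by omega) hik
      simp only [Nat.add_sub_cancel] at hup hdm
      set v := f' (x i) with hv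
      set w := f' (x (i + 1)) with hw
      have hfeas' : g (x (i + 1)) ≤ t₀ + ((i : ℝ) + 1) * ε := by
        rw [hup]
        calc g (x i + Δ (i + 1)) ≤ g (x i) + g (Δ (i + 1)) := hg_add _ _
          _ ≤ (t₀ + i * ε) + ε := add_le_add hfeas hdf
          _ = t₀ + ((i : ℝ) + 1) * ε := by ring
      have htpos : (0 : ℝ) ≤ t₀ + ((i : ℝ) + 1) * ε := by positivity
      have hLg : gs (w - v) ≤ L * ε := by
        have h := hLip (x (i + 1)) (x i)
        have hx : x (i + 1) - x i = Δ (i + 1) := by rw [hup]; abel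
        rw [hx] at h
        exact h.trans (mul_le_mul_of_nonneg_left hdf hL)
      have hA : ⟪w - v, x (i + 1)⟫ ≤ L * ε * (t₀ + ((i : ℝ) + 1) * ε) :=
        calc ⟪w - v, x (i + 1)⟫ ≤ gs (w - v) * g (x (i + 1)) := gs_inner _ _
          _ ≤ (L * ε) * (t₀ + ((i : ℝ) + 1) * ε) :=
              mul_le_mul hLg hfeas' (g_nonneg _) (by positivity)
      have hB : gs w - gs v ≤ L * ε := by
        have := gs_tri v w; linarith
      have hC' : (t₀ + ((i : ℝ) + 1) * ε) * (gs w - gs v) ≤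
          L * ε * (t₀ + ((i : ℝ) + 1) * ε) := by
        calc (t₀ + ((i : ℝ) + 1) * ε) * (gs w - gs v)
            ≤ (t₀ + ((i : ℝ) + 1) * ε) * (L * ε) := mul_le_mul_of_nonneg_left hB htpos
          _ = L * ε * (t₀ + ((i : ℝ) + 1) * ε) := mul_comm _ _
      have hinner : ⟪v, x (i + 1)⟫ = ⟪v, x i⟫ - ε * gs v := by
        rw [hup, inner_add_right, hdm]; ring
      have hdecomp : ⟪w, x (i + 1)⟫ + (t₀ + ((i : ℝ) + 1) * ε) * gs w
          = (⟪v, x i⟫ + (t₀ + (i : ℝ) * ε) * gs v) + ⟪w - v, x (i + 1)⟫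
            + (t₀ + ((i : ℝ) + 1) * ε) * (gs w - gs v) := by
        have h4 : ⟪w, x (i + 1)⟫ = ⟪v, x (i + 1)⟫ + ⟪w - v, x (i + 1)⟫ := by
          rw [inner_sub_left]; ring
        rw [h4, hinner]; ring
      constructor
      · push_cast
        exact hfeas'
      · rw [sum_Icc_succ_top']
        push_cast
        have hgoal : 2 * L * ε * ((∑ j ∈ Finset.Icc 1 i, (t₀ + (j : ℝ) * ε)) +
            (t₀ + ((i : ℝ) + 1) * ε))
            = 2 * L * ε * (∑ j ∈ Finset.Icc 1 i, (t₀ + (j : ℝ) * ε)) +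
              2 * (L * ε * (t₀ + ((i : ℝ) + 1) * ε)) := by ring
        rw [hgoal]
        linarith [hdecomp, hgap, hA, hC']
  refine ⟨by simpa using (key k le_rfl).2, ?_⟩
  rw [sum_Icc_eval]
  ring
end

section
/- Let f : ℝ^n → ℝ be convex and differentiable, g a norm on ℝ^n with dual norm g*, and t ≥ 0. For any x with g(x) ≤ t and any minimizer x̂ of f over {z : g(z) ≤ t}, one has f(x) − f(x̂) ≤ ⟨∇f(x), x⟩ + t·g*(∇f(x)); that is, the duality gap h_t(x) upper bounds the suboptimality of x for the constrained problem. -/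
open scoped RealInnerProductSpace

variable {n : ℕ}

-- gradient inequality for convex functions
lemma convex_grad_ineq (f : EuclideanSpace ℝ (Fin n) → ℝ)
    (f' : EuclideanSpace ℝ (Fin n) → EuclideanSpace ℝ (Fin n))
    (hf_conv : ConvexOn ℝ Set.univ f)
    (hf_diff : ∀ x, HasGradientAt f (f' x) x)
    (x y : EuclideanSpace ℝ (Fin n)) :
    f x - f y ≤ ⟪f' x, x - y⟫ := by
  set φ : ℝ → ℝ := fun s => f (x + s • (y - x)) with hφ
  have hL : HasDerivAt (fun s : ℝ => x + s • (y - x)) (y - x) 0 := by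
    simpa using ((hasDerivAt_id (0:ℝ)).smul_const (y - x)).const_add x
  have hF : HasFDerivAt f (InnerProductSpace.toDual ℝ _ (f' x)) x := by
    have := (hf_diff x).hasFDerivAt
    exact this
  have hd : HasDerivAt φ ⟪f' x, y - x⟫ 0 := by
    have := (show HasFDerivAt f (InnerProductSpace.toDual ℝ _ (f' x)) ((fun s:ℝ => x + s • (y-x)) 0) by simpa using hF).comp_hasDerivAt (0:ℝ) hL
    simp only [InnerProductSpace.toDual_apply_apply] at this
    exact this
  have hslope : Filter.Tendsto (slope φ 0) (nhdsWithin 0 {(0:ℝ)}ᶜ) (nhds ⟪f' x, y - x⟫) :=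
    hasDerivAt_iff_tendsto_slope.mp hd
  have hslope' : Filter.Tendsto (slope φ 0) (nhdsWithin 0 (Set.Ioi 0)) (nhds ⟪f' x, y - x⟫) :=
    hslope.mono_left (nhdsWithin_mono _ (fun s hs => ne_of_gt hs))
  have hbound : ∀ s ∈ Set.Ioo (0:ℝ) 1, slope φ 0 s ≤ f y - f x := by
    intro s hs
    have hconv := hf_conv.2 (Set.mem_univ x) (Set.mem_univ y)
      (le_of_lt (by linarith [hs.1, hs.2] : (0:ℝ) < 1 - s)) (le_of_lt hs.1) (by ring)
    have hxs : x + s • (y - x) = (1 - s) • x + s • y := by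
      module
    have : φ s ≤ (1 - s) * f x + s * f y := by
      rw [hφ]; simp only [hxs]; simpa [smul_eq_mul] using hconv
    have h0 : φ 0 = f x := by simp [hφ]
    have hs0 : (0:ℝ) < s := hs.1
    rw [slope_def_field, h0, sub_zero, div_le_iff₀ hs0]
    nlinarith
  have hev : ∀ᶠ s in nhdsWithin 0 (Set.Ioi (0:ℝ)), slope φ 0 s ≤ f y - f x := by
    filter_upwards [Ioo_mem_nhdsGT_of_mem (by norm_num : (0:ℝ) ∈ Set.Ico (0:ℝ) 1)] with s hs
    exact hbound s hs
  have := le_of_tendsto hslope' hev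
  have h2 : ⟪f' x, y - x⟫ ≤ f y - f x := this
  have h3 : ⟪f' x, x - y⟫ = -⟪f' x, y - x⟫ := by
    rw [← inner_neg_right]; congr 1; abel
  linarith [h2, h3.ge, h3.le]

lemma coord_abs_le_norm (z : EuclideanSpace ℝ (Fin n)) (i : Fin n) : |z i| ≤ ‖z‖ := by
  have h : ⟪EuclideanSpace.single i (1:ℝ), z⟫ = z i := by
    simp [PiLp.inner_apply, EuclideanSpace.single_apply]
  have := abs_real_inner_le_norm (EuclideanSpace.single i (1:ℝ)) z
  rw [h, EuclideanSpace.norm_single] at this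
  simpa using this

lemma norm_lower_bound (g : EuclideanSpace ℝ (Fin n) → ℝ)
    (hg_add : ∀ x y, g (x + y) ≤ g x + g y)
    (hg_smul : ∀ (a : ℝ) (x : EuclideanSpace ℝ (Fin n)), g (a • x) = |a| * g x)
    (hg_zero : ∀ x, g x = 0 → x = 0) :
    ∃ m > 0, ∀ z, m * ‖z‖ ≤ g z := by
  have hg0 : g 0 = 0 := by
    have := hg_smul 0 0; simpa using this
  have hgneg : ∀ z, g (-z) = g z := by
    intro z; have := hg_smul (-1) z; simpa using this
  have hgnonneg : ∀ z, 0 ≤ g z := by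
    intro z
    have h := hg_add z (-z)
    rw [add_neg_cancel, hg0, hgneg] at h
    linarith
  have hgsub : ∀ a b, g a - g b ≤ g (a - b) := by
    intro a b
    have := hg_add (a - b) b
    simpa using this
  obtain ⟨C, hC⟩ : ∃ C, ∀ z : EuclideanSpace ℝ (Fin n), g z ≤ C * ‖z‖ := by
    refine ⟨∑ i, g (EuclideanSpace.basisFun (Fin n) ℝ i), fun z => ?_⟩
    have hz : z = ∑ i, z i • EuclideanSpace.basisFun (Fin n) ℝ i := by
      have := (EuclideanSpace.basisFun (Fin n) ℝ).sum_repr z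
      simpa [EuclideanSpace.basisFun_repr] using this.symm
    calc g z = g (∑ i, z i • EuclideanSpace.basisFun (Fin n) ℝ i) := by rw [← hz]
      _ ≤ ∑ i, g (z i • EuclideanSpace.basisFun (Fin n) ℝ i) :=
          Finset.le_sum_of_subadditive g hg0.le hg_add _ _
      _ = ∑ i, |z i| * g (EuclideanSpace.basisFun (Fin n) ℝ i) := by
          simp [hg_smul]
      _ ≤ ∑ i, ‖z‖ * g (EuclideanSpace.basisFun (Fin n) ℝ i) := by
          refine Finset.sum_le_sum fun i _ => ?_
          exact mul_le_mul_of_nonneg_right (coord_abs_le_norm z i) (hgnonneg _)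
      _ = (∑ i, g (EuclideanSpace.basisFun (Fin n) ℝ i)) * ‖z‖ := by
          rw [Finset.sum_mul]; exact Finset.sum_congr rfl fun i _ => mul_comm _ _
  have hcont : Continuous g := by
    have hlip : LipschitzWith (Real.toNNReal C) g := by
      apply LipschitzWith.of_dist_le_mul
      intro a b
      rw [Real.dist_eq, dist_eq_norm]
      have h1 := (hgsub a b).trans (hC (a - b))
      have h2 := (hgsub b a).trans (hC (b - a))
      rw [show b - a = -(a-b) by abel, norm_neg] at h2
      have hle : C * ‖a - b‖ ≤ (Real.toNNReal C : ℝ) * ‖a - b‖ :=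
        mul_le_mul_of_nonneg_right (Real.le_coe_toNNReal C) (norm_nonneg _)
      rw [abs_le]
      constructor <;> linarith
    exact hlip.continuous
  by_cases hn : ∀ z : EuclideanSpace ℝ (Fin n), z = 0
  · refine ⟨1, one_pos, fun z => ?_⟩
    rw [hn z, hg0, norm_zero, mul_zero]
  · push_neg at hn
    obtain ⟨w, hw⟩ := hn
    have hsph : (Metric.sphere (0 : EuclideanSpace ℝ (Fin n)) 1).Nonempty := by
      refine ⟨‖w‖⁻¹ • w, ?_⟩
      simp [norm_smul, abs_inv, inv_mul_cancel₀ (norm_ne_zero_iff.mpr hw),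
        Real.norm_eq_abs, abs_of_nonneg (norm_nonneg w)]
    obtain ⟨z₀, hz₀mem, hz₀min⟩ := (isCompact_sphere (0 : EuclideanSpace ℝ (Fin n)) 1).exists_isMinOn
      hsph hcont.continuousOn
    have hz₀norm : ‖z₀‖ = 1 := by simpa using hz₀mem
    have hz₀ne : z₀ ≠ 0 := by intro h; rw [h] at hz₀norm; simp at hz₀norm
    have hm : 0 < g z₀ := by
      rcases lt_or_eq_of_le (hgnonneg z₀) with h | h
      · exact h
      · exact absurd (hg_zero z₀ h.symm) hz₀ne
    refine ⟨g z₀, hm, fun z => ?_⟩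
    rcases eq_or_ne z 0 with rfl | hz
    · simp [hg0]
    · have hzn : ‖z‖ ≠ 0 := norm_ne_zero_iff.mpr hz
      have hmem : ‖z‖⁻¹ • z ∈ Metric.sphere (0 : EuclideanSpace ℝ (Fin n)) 1 := by
        simp [norm_smul, abs_inv, inv_mul_cancel₀ hzn, Real.norm_eq_abs,
          abs_of_nonneg (norm_nonneg z)]
      have h5 : g z₀ ≤ ‖z‖⁻¹ * g z := by
        have h4 := hz₀min hmem
        simpa [hg_smul, abs_inv, abs_of_nonneg (norm_nonneg z)] using h4
      have this := h5
      have hpos : (0:ℝ) < ‖z‖ := (norm_nonneg z).lt_of_ne (Ne.symm hzn)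
      calc g z₀ * ‖z‖ ≤ (‖z‖⁻¹ * g z) * ‖z‖ :=
            mul_le_mul_of_nonneg_right this (norm_nonneg z)
        _ = g z := by field_simp

/-- The duality gap `h_t(x) = ⟨∇f(x), x⟩ + t·g*(∇f(x))` upper bounds the suboptimality
of a feasible point `x` for the norm-constrained convex problem. -/
theorem duality_gap_bounds_suboptimality {n : ℕ}
    (f : EuclideanSpace ℝ (Fin n) → ℝ)
    (f' : EuclideanSpace ℝ (Fin n) → EuclideanSpace ℝ (Fin n))
    (hf_conv : ConvexOn ℝ Set.univ f)
    (hf_diff : ∀ x, HasGradientAt f (f' x) x)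
    (g : EuclideanSpace ℝ (Fin n) → ℝ)
    (hg_add : ∀ x y, g (x + y) ≤ g x + g y)
    (hg_smul : ∀ (a : ℝ) (x : EuclideanSpace ℝ (Fin n)), g (a • x) = |a| * g x)
    (hg_zero : ∀ x, g x = 0 → x = 0)
    (gs : EuclideanSpace ℝ (Fin n) → ℝ)
    (hgs : ∀ v, gs v = sSup {r : ℝ | ∃ z, g z ≤ 1 ∧ ⟪v, z⟫ = r})
    (t : ℝ) (ht : 0 ≤ t)
    (x : EuclideanSpace ℝ (Fin n)) (hx_feas : g x ≤ t)
    (xhat : EuclideanSpace ℝ (Fin n))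
    (hxhat_feas : g xhat ≤ t) (hxhat_min : ∀ z, g z ≤ t → f xhat ≤ f z) :
    f x - f xhat ≤ ⟪f' x, x⟫ + t * gs (f' x) := by
  have hg0 : g 0 = 0 := by
    have := hg_smul 0 0; simpa using this
  have hgneg : ∀ z, g (-z) = g z := by
    intro z; have := hg_smul (-1) z; simpa using this
  have hgnonneg : ∀ z, 0 ≤ g z := by
    intro z
    have h := hg_add z (-z)
    rw [add_neg_cancel, hg0, hgneg] at h
    linarith
  obtain ⟨m, hm, hml⟩ := norm_lower_bound g hg_add hg_smul hg_zero
  set v := f' x with hv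
  set S : Set ℝ := {r : ℝ | ∃ z, g z ≤ 1 ∧ ⟪v, z⟫ = r} with hS
  have hSne : S.Nonempty := ⟨0, 0, by simp [hg0], by simp⟩
  have hSbdd : BddAbove S := by
    refine ⟨‖v‖ * m⁻¹, fun r hr => ?_⟩
    obtain ⟨z, hz1, rfl⟩ := hr
    have h1 : ⟪v, z⟫ ≤ ‖v‖ * ‖z‖ := real_inner_le_norm v z
    have h2 : ‖z‖ ≤ m⁻¹ := by
      have := (hml z).trans hz1
      rw [← le_div_iff₀' hm] at this
      simpa [one_div] using this
    calc ⟪v, z⟫ ≤ ‖v‖ * ‖z‖ := h1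
      _ ≤ ‖v‖ * m⁻¹ := mul_le_mul_of_nonneg_left h2 (norm_nonneg v)
  have hgrad := convex_grad_ineq f f' hf_conv hf_diff x xhat
  have hinner : ⟪v, x - xhat⟫ = ⟪v, x⟫ - ⟪v, xhat⟫ := by
    rw [inner_sub_right]
  have hkey : -⟪v, xhat⟫ ≤ t * gs v := by
    rcases eq_or_lt_of_le ht with rfl | htpos
    · have : g xhat = 0 := le_antisymm hxhat_feas (hgnonneg xhat)
      rw [hg_zero xhat this]
      simp
    · have hz1 : g (t⁻¹ • (-xhat)) ≤ 1 := by
        rw [hg_smul, hgneg, abs_inv, abs_of_pos htpos]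
        rw [inv_mul_le_iff₀ htpos]
        simpa using hxhat_feas
      have hmem : ⟪v, t⁻¹ • (-xhat)⟫ ∈ S := ⟨_, hz1, rfl⟩
      have hle : ⟪v, t⁻¹ • (-xhat)⟫ ≤ gs v := by
        rw [hgs v]
        exact le_csSup hSbdd hmem
      have hval : ⟪v, t⁻¹ • (-xhat)⟫ = t⁻¹ * (-⟪v, xhat⟫) := by
        rw [real_inner_smul_right, inner_neg_right]
      rw [hval] at hle
      calc -⟪v, xhat⟫ = t * (t⁻¹ * (-⟪v, xhat⟫)) := by
            field_simp
        _ ≤ t * gs v := mul_le_mul_of_nonneg_left hle (le_of_lt htpos)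
  calc f x - f xhat ≤ ⟪v, x - xhat⟫ := hgrad
    _ = ⟪v, x⟫ + (-⟪v, xhat⟫) := by rw [hinner]; ring
    _ ≤ ⟪v, x⟫ + t * gs v := by linarith
end

section
/- Let f : ℝ^n → ℝ be convex and differentiable, g a norm on ℝ^n with dual norm g*, and t ≥ 0. If x̂ is a minimizer of f over {z : g(z) ≤ t} (so in particular g(x̂) ≤ t), then the duality gap at x̂ vanishes: ⟨∇f(x̂), x̂⟩ + t·g*(∇f(x̂)) = 0. -/
open scoped RealInnerProductSpace

/-- The duality gap vanishes at a solution of the norm-constrained convex problem: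
if `x̂` minimizes `f` over `{z : g(z) ≤ t}`, then `⟨∇f(x̂), x̂⟩ + t·g*(∇f(x̂)) = 0`. -/
theorem duality_gap_eq_zero_at_minimizer {n : ℕ}
    (f : EuclideanSpace ℝ (Fin n) → ℝ)
    (f' : EuclideanSpace ℝ (Fin n) → EuclideanSpace ℝ (Fin n))
    (hf_conv : ConvexOn ℝ Set.univ f)
    (hf_diff : ∀ x, HasGradientAt f (f' x) x)
    (g : EuclideanSpace ℝ (Fin n) → ℝ)
    (hg_add : ∀ x y, g (x + y) ≤ g x + g y)
    (hg_smul : ∀ (a : ℝ) (x : EuclideanSpace ℝ (Fin n)), g (a • x) = |a| * g x)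
    (hg_zero : ∀ x, g x = 0 → x = 0)
    (gs : EuclideanSpace ℝ (Fin n) → ℝ)
    (hgs : ∀ v, gs v = sSup {r : ℝ | ∃ z, g z ≤ 1 ∧ ⟪v, z⟫ = r})
    (t : ℝ) (ht : 0 ≤ t)
    (xhat : EuclideanSpace ℝ (Fin n))
    (hxhat_feas : g xhat ≤ t) (hxhat_min : ∀ z, g z ≤ t → f xhat ≤ f z) :
    ⟪f' xhat, xhat⟫ + t * gs (f' xhat) = 0 := by
  set v := f' xhat with hv
  have hg0 : g 0 = 0 := by
    have := hg_smul 0 0; simpa using this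
  have hg_nonneg : ∀ x, 0 ≤ g x := by
    intro x
    have h1 : g (x + (-1 : ℝ) • x) ≤ g x + g ((-1 : ℝ) • x) := hg_add _ _
    rw [hg_smul] at h1
    simp at h1
    nlinarith [h1]
  -- the feasible set is convex
  set S : Set (EuclideanSpace ℝ (Fin n)) := {z | g z ≤ t} with hS
  have hSconv : Convex ℝ S := by
    intro a ha b hb p q hp hq hpq
    have h1 : g (p • a + q • b) ≤ g (p • a) + g (q • b) := hg_add _ _
    rw [hg_smul, hg_smul, abs_of_nonneg hp, abs_of_nonneg hq] at h1
    calc g (p • a + q • b) ≤ p * g a + q * g b := h1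
      _ ≤ p * t + q * t := by
          gcongr <;> [exact ha; exact hb]
      _ = t := by rw [← add_mul, hpq, one_mul]
  -- first-order optimality
  have key : ∀ w, g w ≤ t → ⟪v, xhat⟫ ≤ ⟪v, w⟫ := by
    intro w hw
    have hmin : IsLocalMinOn f S xhat :=
      eventually_nhdsWithin_of_forall fun z hz => hxhat_min z hz
    have htan : w - xhat ∈ posTangentConeAt S xhat := by
      apply sub_mem_posTangentConeAt_of_segment_subset
      exact hSconv.segment_subset hxhat_feas hw
    have hfd : HasFDerivWithinAt f ((InnerProductSpace.toDual ℝ _) v) S xhat :=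
      ((hf_diff xhat).hasFDerivAt).hasFDerivWithinAt
    have := hmin.hasFDerivWithinAt_nonneg hfd htan
    have h2 : ((InnerProductSpace.toDual ℝ _) v) (w - xhat) = ⟪v, w⟫ - ⟪v, xhat⟫ := by
      simp [InnerProductSpace.toDual_apply_apply, inner_sub_right]
    linarith [h2 ▸ this]
  set A : Set ℝ := {r : ℝ | ∃ z, g z ≤ 1 ∧ ⟪v, z⟫ = r} with hA
  have hA0 : (0 : ℝ) ∈ A := ⟨0, by simp [hg0], by simp⟩
  rcases eq_or_lt_of_le ht with h0 | htpos
  · -- t = 0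
    have hx0 : xhat = 0 := hg_zero _ (le_antisymm (h0 ▸ hxhat_feas) (hg_nonneg _))
    rw [hx0, ← h0]
    simp
  · -- t > 0
    have hub : ∀ r ∈ A, r ≤ -⟪v, xhat⟫ / t := by
      rintro r ⟨z, hz, rfl⟩
      have hw : g ((-t) • z) ≤ t := by
        rw [hg_smul, abs_neg, abs_of_pos htpos]
        nlinarith [hg_nonneg z]
      have := key _ hw
      rw [inner_smul_right] at this
      rw [le_div_iff₀ htpos]
      nlinarith
    have hsup_le : sSup A ≤ -⟪v, xhat⟫ / t := csSup_le ⟨0, hA0⟩ hub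
    have hmem : -⟪v, xhat⟫ / t ∈ A := by
      refine ⟨(-(1/t)) • xhat, ?_, ?_⟩
      · rw [hg_smul, abs_neg, abs_of_pos (by positivity)]
        rw [div_mul_eq_mul_div, one_mul, div_le_one htpos]
        exact hxhat_feas
      · rw [inner_smul_right]; ring
    have hle_sup : -⟪v, xhat⟫ / t ≤ sSup A :=
      le_csSup ⟨-⟪v, xhat⟫ / t, hub⟩ hmem
    have hsup : sSup A = -⟪v, xhat⟫ / t := le_antisymm hsup_le hle_sup
    rw [hgs, ← hA, hsup]
    field_simp
    ring
end

section
/- Let f : ℝ^n → ℝ be convex and differentiable, g a norm on ℝ^n with dual norm g*, and γ > 0, m > 1. Suppose x ∈ ℝ^n satisfies g(x) ≤ t_k and the duality gap bound ⟨∇f(x), x⟩ + t_k·g*(∇f(x)) ≤ γ/m, and that g*(∇f(x)) > 0. Then for every t with t_k ≤ t ≤ t_k + (γ − γ/m)/g*(∇f(x)), the point x is feasible for the constrained problem at t and for every minimizer x̂ of f over {z : g(z) ≤ t} one has f(x) − f(x̂) ≤ ⟨∇f(x), x⟩ + t·g*(∇f(x)) ≤ γ; that is, the Frank–Wolfe path-following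 procedure produces a γ-suboptimal path on each parameter interval. -/
open scoped RealInnerProductSpace

/-- Gradient inequality for convex functions. -/
lemma grad_ineq_aux {E : Type*} [NormedAddCommGroup E] [InnerProductSpace ℝ E]
    [CompleteSpace E] {f : E → ℝ} {d x y : E}
    (hf : ConvexOn ℝ Set.univ f) (hd : HasGradientAt f d x) :
    f x + ⟪d, y - x⟫ ≤ f y := by
  have hc : HasDerivAt (fun s : ℝ => x + s • (y - x)) (y - x) 0 := by
    simpa using ((hasDerivAt_id (0 : ℝ)).smul_const (y - x)).const_add x
  have hF : HasDerivAt (fun s : ℝ => f (x + s • (y - x))) ⟪d, y - x⟫ 0 := by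
    have h1 : HasFDerivAt f (InnerProductSpace.toDual ℝ E d) (x + (0:ℝ) • (y - x)) := by
      simpa using hd.hasFDerivAt
    have h2 := h1.comp_hasDerivAt (0 : ℝ) hc
    exact h2
  rw [hasDerivAt_iff_tendsto_slope] at hF
  have hF' : Filter.Tendsto (slope (fun s : ℝ => f (x + s • (y - x))) 0)
      (nhdsWithin 0 (Set.Ioi 0)) (nhds ⟪d, y - x⟫) :=
    hF.mono_left (nhdsWithin_mono _ (fun s hs => ne_of_gt hs))
  have key : ⟪d, y - x⟫ ≤ f y - f x := by
    refine le_of_tendsto hF' ?_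
    filter_upwards [Ioc_mem_nhdsGT_of_mem (Set.left_mem_Ico.2 one_pos)] with s hs
    obtain ⟨hs0, hs1⟩ := hs
    have hconv := hf.2 (Set.mem_univ x) (Set.mem_univ y)
      (by linarith : (0:ℝ) ≤ 1 - s) (le_of_lt hs0) (by ring)
    have heq : (1 - s) • x + s • y = x + s • (y - x) := by module
    rw [heq] at hconv
    simp only [smul_eq_mul] at hconv
    have hslope : slope (fun s : ℝ => f (x + s • (y - x))) 0 s
        = (f (x + s • (y - x)) - f x) / s := by
      rw [slope_def_field]; simp
    rw [hslope, div_le_iff₀ hs0]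
    nlinarith
  linarith

/-- A norm on Euclidean space dominates the Euclidean norm (up to a constant). -/
lemma norm_equiv_aux {n : ℕ} [Nontrivial (EuclideanSpace ℝ (Fin n))]
    (g : EuclideanSpace ℝ (Fin n) → ℝ)
    (hg_add : ∀ x y, g (x + y) ≤ g x + g y)
    (hg_smul : ∀ (a : ℝ) (x : EuclideanSpace ℝ (Fin n)), g (a • x) = |a| * g x)
    (hg_zero : ∀ x, g x = 0 → x = 0) :
    ∃ c : ℝ, 0 < c ∧ ∀ z : EuclideanSpace ℝ (Fin n), c * ‖z‖ ≤ g z := by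
  have g0 : g 0 = 0 := by simpa using hg_smul 0 0
  have gnonneg : ∀ z, 0 ≤ g z := by
    intro z
    have h1 := hg_add z ((-1 : ℝ) • z)
    have h2 : g ((-1 : ℝ) • z) = g z := by rw [hg_smul]; simp
    rw [h2] at h1
    have h3 : z + (-1 : ℝ) • z = 0 := by module
    rw [h3, g0] at h1
    linarith
  -- upper bound
  have gupper : ∃ C : ℝ, 0 ≤ C ∧ ∀ z : EuclideanSpace ℝ (Fin n), g z ≤ C * ‖z‖ := by
    refine ⟨∑ i, g (EuclideanSpace.single i 1), Finset.sum_nonneg fun i _ => gnonneg _, ?_⟩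
    intro z
    have habs : ∀ i, |z i| ≤ ‖z‖ := by
      intro i
      have h := abs_real_inner_le_norm (EuclideanSpace.single i (1:ℝ)) z
      rw [EuclideanSpace.inner_single_left, EuclideanSpace.norm_single] at h
      simpa using h
    have hz : z = ∑ i, z i • EuclideanSpace.single i (1 : ℝ) := by
      ext j
      rw [WithLp.ofLp_sum, Fintype.sum_apply]
      simp [EuclideanSpace.single_apply, Finset.sum_ite_eq']
    calc g z = g (∑ i, z i • EuclideanSpace.single i (1 : ℝ)) := by rw [← hz]
      _ ≤ ∑ i, g (z i • EuclideanSpace.single i (1 : ℝ)) :=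
          Finset.le_sum_of_subadditive g g0.le hg_add _ _
      _ = ∑ i, |z i| * g (EuclideanSpace.single i (1 : ℝ)) := by simp [hg_smul]
      _ ≤ ∑ i, ‖z‖ * g (EuclideanSpace.single i (1 : ℝ)) :=
          Finset.sum_le_sum fun i _ => mul_le_mul_of_nonneg_right (habs i) (gnonneg _)
      _ = (∑ i, g (EuclideanSpace.single i 1)) * ‖z‖ := by
          rw [Finset.sum_mul]; exact Finset.sum_congr rfl fun i _ => mul_comm _ _
  obtain ⟨C, hC0, hC⟩ := gupper
  -- continuity
  have gcont : Continuous g := by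
    rw [Metric.continuous_iff]
    intro a ε hε
    rcases eq_or_lt_of_le hC0 with hC0' | hC0'
    · refine ⟨1, one_pos, fun b _ => ?_⟩
      have h1 : g b ≤ 0 := le_trans (hC b) (by rw [← hC0']; simp)
      have h2 : g a ≤ 0 := le_trans (hC a) (by rw [← hC0']; simp)
      have h1' := gnonneg b; have h2' := gnonneg a
      have heq : g b = g a := by linarith
      simpa [Real.dist_eq, heq] using hε
    · refine ⟨ε / C, div_pos hε hC0', fun b hb => ?_⟩
      have habs : |g b - g a| ≤ g (b - a) := by
        rw [abs_sub_le_iff]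
        constructor
        · have h := hg_add a (b - a)
          have : a + (b - a) = b := by abel
          rw [this] at h; linarith
        · have h := hg_add b (a - b)
          have h1 : b + (a - b) = a := by abel
          rw [h1] at h
          have h2 : g (a - b) = g (b - a) := by
            have := hg_smul (-1) (b - a)
            simp only [neg_smul, one_smul, neg_sub] at this
            simpa using this
          linarith
      rw [Real.dist_eq]
      calc |g b - g a| ≤ C * ‖b - a‖ := le_trans habs (hC _)
        _ < C * (ε / C) := mul_lt_mul_of_pos_left (by simpa [dist_eq_norm] using hb) hC0'
        _ = ε := by field_simp
  -- minimum on the sphere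
  have hsph : (Metric.sphere (0 : EuclideanSpace ℝ (Fin n)) 1).Nonempty := by
    obtain ⟨z, hz⟩ := exists_norm_eq (EuclideanSpace ℝ (Fin n)) (le_of_lt one_pos)
    exact ⟨z, by simpa using hz⟩
  obtain ⟨z0, hz0mem, hz0min⟩ :=
    (isCompact_sphere (0 : EuclideanSpace ℝ (Fin n)) 1).exists_isMinOn hsph gcont.continuousOn
  have hz0norm : ‖z0‖ = 1 := by simpa using hz0mem
  have hz0pos : 0 < g z0 := by
    rcases lt_or_eq_of_le (gnonneg z0) with h | h
    · exact h
    · exfalso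
      have := hg_zero z0 h.symm
      rw [this] at hz0norm; simp at hz0norm
  refine ⟨g z0, hz0pos, fun z => ?_⟩
  rcases eq_or_ne z 0 with rfl | hz
  · simp [g0]
  · have hn : (0:ℝ) < ‖z‖ := norm_pos_iff.2 hz
    have hmem : (‖z‖⁻¹ • z) ∈ Metric.sphere (0 : EuclideanSpace ℝ (Fin n)) 1 := by
      simp [norm_smul, abs_of_pos (inv_pos.2 hn), inv_mul_cancel₀ (ne_of_gt hn)]
    have hmin := hz0min hmem
    have hval : g (‖z‖⁻¹ • z) = ‖z‖⁻¹ * g z := by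
      rw [hg_smul, abs_of_pos (inv_pos.2 hn)]
    rw [Set.mem_setOf_eq, hval] at hmin
    calc g z0 * ‖z‖ ≤ (‖z‖⁻¹ * g z) * ‖z‖ := mul_le_mul_of_nonneg_right hmin (le_of_lt hn)
      _ = g z := by field_simp

/-- The Frank–Wolfe path-following procedure produces a `γ`-suboptimal path: if `x` is
feasible at `t_k` with duality gap at most `γ/m`, then for every
`t ∈ [t_k, t_k + (γ − γ/m)/g*(∇f(x))]`, `x` is feasible at `t`, and its suboptimality
at `t` is bounded by the duality gap at `t`, which is at most `γ`. -/
theorem frank_wolfe_path_following {n : ℕ}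
    (f : EuclideanSpace ℝ (Fin n) → ℝ)
    (f' : EuclideanSpace ℝ (Fin n) → EuclideanSpace ℝ (Fin n))
    (hf_conv : ConvexOn ℝ Set.univ f)
    (hf_diff : ∀ x, HasGradientAt f (f' x) x)
    (g : EuclideanSpace ℝ (Fin n) → ℝ)
    (hg_add : ∀ x y, g (x + y) ≤ g x + g y)
    (hg_smul : ∀ (a : ℝ) (x : EuclideanSpace ℝ (Fin n)), g (a • x) = |a| * g x)
    (hg_zero : ∀ x, g x = 0 → x = 0)
    (gs : EuclideanSpace ℝ (Fin n) → ℝ)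
    (hgs : ∀ v, gs v = sSup {r : ℝ | ∃ z, g z ≤ 1 ∧ ⟪v, z⟫ = r})
    (γ m : ℝ) (hγ : 0 < γ) (hm : 1 < m)
    (tk : ℝ) (x : EuclideanSpace ℝ (Fin n))
    (hx_feas : g x ≤ tk)
    (hx_gap : ⟪f' x, x⟫ + tk * gs (f' x) ≤ γ / m)
    (hgrad_pos : 0 < gs (f' x)) :
    ∀ t : ℝ, tk ≤ t → t ≤ tk + (γ - γ / m) / gs (f' x) →
      g x ≤ t ∧
      (∀ xhat : EuclideanSpace ℝ (Fin n),
        g xhat ≤ t → (∀ z, g z ≤ t → f xhat ≤ f z) →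
        f x - f xhat ≤ ⟪f' x, x⟫ + t * gs (f' x)) ∧
      ⟪f' x, x⟫ + t * gs (f' x) ≤ γ := by
  have g0 : g 0 = 0 := by simpa using hg_smul 0 0
  have gnonneg : ∀ z, 0 ≤ g z := by
    intro z
    have h1 := hg_add z ((-1 : ℝ) • z)
    have h2 : g ((-1 : ℝ) • z) = g z := by rw [hg_smul]; simp
    rw [h2] at h1
    have h3 : z + (-1 : ℝ) • z = 0 := by module
    rw [h3, g0] at h1
    linarith
  have gneg : ∀ z : EuclideanSpace ℝ (Fin n), g (-z) = g z := by
    intro z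
    have := hg_smul (-1) z
    simpa using this
  -- nontriviality
  rcases subsingleton_or_nontrivial (EuclideanSpace ℝ (Fin n)) with hE | hE
  · exfalso
    have hset : {r : ℝ | ∃ z : EuclideanSpace ℝ (Fin n), g z ≤ 1 ∧ ⟪f' x, z⟫ = r} = {0} := by
      ext r
      constructor
      · rintro ⟨z, _, hz⟩
        have hz0 : z = (0 : EuclideanSpace ℝ (Fin n)) := Subsingleton.elim _ _
        rw [hz0] at hz
        simp at hz
        simp [← hz]
      · rintro rfl
        exact ⟨0, by simp [g0], by simp⟩
    have : gs (f' x) = 0 := by rw [hgs, hset, csSup_singleton]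
    linarith
  obtain ⟨c, hc0, hc⟩ := norm_equiv_aux g hg_add hg_smul hg_zero
  set v := f' x with hv
  have hbdd : BddAbove {r : ℝ | ∃ z : EuclideanSpace ℝ (Fin n), g z ≤ 1 ∧ ⟪v, z⟫ = r} := by
    refine ⟨‖v‖ * (1 / c), ?_⟩
    rintro r ⟨z, hz1, rfl⟩
    have hzn : ‖z‖ ≤ 1 / c := by
      have := hc z
      rw [le_div_iff₀ hc0, mul_comm]
      linarith
    calc ⟪v, z⟫ ≤ ‖v‖ * ‖z‖ := real_inner_le_norm v z
      _ ≤ ‖v‖ * (1 / c) := mul_le_mul_of_nonneg_left hzn (norm_nonneg v)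
  have hdual : ∀ z : EuclideanSpace ℝ (Fin n), ⟪v, z⟫ ≤ g z * gs v := by
    intro z
    rcases eq_or_lt_of_le (gnonneg z) with h | h
    · have hz0 : z = 0 := hg_zero z h.symm
      simp [hz0, g0]
    · have hu : g ((g z)⁻¹ • z) ≤ 1 := by
        rw [hg_smul, abs_of_pos (inv_pos.2 h), inv_mul_cancel₀ (ne_of_gt h)]
      have hmem : ⟪v, (g z)⁻¹ • z⟫ ∈
          {r : ℝ | ∃ z : EuclideanSpace ℝ (Fin n), g z ≤ 1 ∧ ⟪v, z⟫ = r} := ⟨_, hu, rfl⟩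
      have hle : ⟪v, (g z)⁻¹ • z⟫ ≤ gs v := by
        rw [hgs]; exact le_csSup hbdd hmem
      rw [real_inner_smul_right] at hle
      calc ⟪v, z⟫ = g z * ((g z)⁻¹ * ⟪v, z⟫) := by field_simp
        _ ≤ g z * gs v := mul_le_mul_of_nonneg_left hle (le_of_lt h)
  intro t ht1 ht2
  have hfeas : g x ≤ t := le_trans hx_feas ht1
  refine ⟨hfeas, ?_, ?_⟩
  · intro xhat hxhat _
    have hgrad := grad_ineq_aux hf_conv (hf_diff x) (y := xhat)
    have h1 : f x - f xhat ≤ -⟪v, xhat - x⟫ := by rw [hv]; linarith [hgrad]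
    have h2 : -⟪v, xhat - x⟫ = ⟪v, x⟫ + ⟪v, -xhat⟫ := by
      rw [inner_sub_right, inner_neg_right]; ring
    have h3 : ⟪v, -xhat⟫ ≤ g (-xhat) * gs v := hdual _
    rw [gneg] at h3
    have h4 : g xhat * gs v ≤ t * gs v :=
      mul_le_mul_of_nonneg_right hxhat (le_of_lt hgrad_pos)
    calc f x - f xhat ≤ ⟪v, x⟫ + ⟪v, -xhat⟫ := by rw [← h2]; exact h1
      _ ≤ ⟪v, x⟫ + g xhat * gs v := by linarith
      _ ≤ ⟪v, x⟫ + t * gs v := by linarith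
  · have hstep : (t - tk) * gs v ≤ γ - γ / m := by
      have hle : t - tk ≤ (γ - γ / m) / gs v := by linarith
      calc (t - tk) * gs v ≤ ((γ - γ / m) / gs v) * gs v :=
            mul_le_mul_of_nonneg_right hle (le_of_lt hgrad_pos)
        _ = γ - γ / m := by field_simp
    have heq : ⟪v, x⟫ + t * gs v = (⟪v, x⟫ + tk * gs v) + (t - tk) * gs v := by ring
    rw [heq]
    linarith
end

section
/- Let f : ℝ^n → ℝ be differentiable, g a norm on ℝ^n with dual norm g*, ε > 0, t₀ ≥ 0, and t_i = t₀ + i·ε. Suppose x⁽⁰⁾ satisfies ⟨∇f(x⁽⁰⁾), x⁽⁰⁾⟩ + t₀·g*(∇f(x⁽⁰⁾)) = 0, and for i = 1,…,k define x⁽ⁱ⁾ = x⁽ⁱ⁻¹⁾ − ε·δ⁽ⁱ⁻¹⁾, where δ⁽ⁱ⁻¹⁾ satisfies g(δ⁽ⁱ⁻¹⁾) ≤ 1 and ⟨∇f(x⁽ⁱ⁻¹⁾), δ⁽ⁱ⁻¹⁾⟩ = g*(∇f(x⁽ⁱ⁻¹⁾)). Then the duality gap at step k obeys the exact recursion: ⟨∇f(x⁽ᵏ⁾),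 x⁽ᵏ⁾⟩ + t_k·g*(∇f(x⁽ᵏ⁾)) = Σ_{i=1}^k ⟨∇f(x⁽ⁱ⁾) − ∇f(x⁽ⁱ⁻¹⁾), x⁽ⁱ⁾⟩ + Σ_{i=1}^k t_i·(g*(∇f(x⁽ⁱ⁾)) − g*(∇f(x⁽ⁱ⁻¹⁾))). -/
open scoped RealInnerProductSpace BigOperators

/-- The exact telescoping recursion for the duality gap of the (pure) stagewise iterates,
used in the proof of Theorem 1. -/
theorem stagewise_duality_gap_recursion {n : ℕ}
    (f : EuclideanSpace ℝ (Fin n) → ℝ)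
    (f' : EuclideanSpace ℝ (Fin n) → EuclideanSpace ℝ (Fin n))
    (hf_diff : ∀ x, HasGradientAt f (f' x) x)
    (g : EuclideanSpace ℝ (Fin n) → ℝ)
    (hg_add : ∀ x y, g (x + y) ≤ g x + g y)
    (hg_smul : ∀ (a : ℝ) (x : EuclideanSpace ℝ (Fin n)), g (a • x) = |a| * g x)
    (hg_zero : ∀ x, g x = 0 → x = 0)
    (gs : EuclideanSpace ℝ (Fin n) → ℝ)
    (hgs : ∀ v, gs v = sSup {r : ℝ | ∃ z, g z ≤ 1 ∧ ⟪v, z⟫ = r})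
    (ε : ℝ) (hε : 0 < ε) (t₀ : ℝ) (ht₀ : 0 ≤ t₀)
    (k : ℕ)
    (x : ℕ → EuclideanSpace ℝ (Fin n)) (δ : ℕ → EuclideanSpace ℝ (Fin n))
    (hx0_gap : ⟪f' (x 0), x 0⟫ + t₀ * gs (f' (x 0)) = 0)
    (hupd : ∀ i, 1 ≤ i → i ≤ k → x i = x (i - 1) - ε • δ (i - 1))
    (hδ_feas : ∀ i, 1 ≤ i → i ≤ k → g (δ (i - 1)) ≤ 1)
    (hδ_max : ∀ i, 1 ≤ i → i ≤ k →
      ⟪f' (x (i - 1)), δ (i - 1)⟫ = gs (f' (x (i - 1)))) :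
    ⟪f' (x k), x k⟫ + (t₀ + k * ε) * gs (f' (x k)) =
      (∑ i ∈ Finset.Icc 1 k, ⟪f' (x i) - f' (x (i - 1)), x i⟫) +
      ∑ i ∈ Finset.Icc 1 k, (t₀ + (i : ℝ) * ε) * (gs (f' (x i)) - gs (f' (x (i - 1)))) := by
  induction k with
  | zero => simpa using hx0_gap
  | succ k ih =>
    have ih' := ih (fun i h1 h2 => hupd i h1 (h2.trans (Nat.le_succ k)))
      (fun i h1 h2 => hδ_feas i h1 (h2.trans (Nat.le_succ k)))
      (fun i h1 h2 => hδ_max i h1 (h2.trans (Nat.le_succ k)))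
    have hx : x (k+1) = x k - ε • δ k := by
      simpa using hupd (k+1) (Nat.le_add_left 1 k) le_rfl
    have hδm : ⟪f' (x k), δ k⟫ = gs (f' (x k)) := by
      simpa using hδ_max (k+1) (Nat.le_add_left 1 k) le_rfl
    rw [Finset.sum_Icc_succ_top (Nat.one_le_iff_ne_zero.mpr (Nat.succ_ne_zero k)),
        Finset.sum_Icc_succ_top (Nat.one_le_iff_ne_zero.mpr (Nat.succ_ne_zero k))]
    simp only [Nat.add_sub_cancel]
    have key : ⟪f' (x (k+1)) - f' (x k), x (k+1)⟫
        = ⟪f' (x (k+1)), x (k+1)⟫ - ⟪f' (x k), x (k+1)⟫ := inner_sub_left _ _ _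
    have hinner : ⟪f' (x k), x (k+1)⟫ = ⟪f' (x k), x k⟫ - ε * gs (f' (x k)) := by
      rw [hx, inner_sub_right, real_inner_smul_right, hδm]
    push_cast
    linarith [ih', key, hinner]
end

section
/- Let f : ℝ^n → ℝ be differentiable, g a norm on ℝ^n with dual norm g*, ε > 0, and α ∈ (0,1]. Set t₀ = 0 and t_i = α·t_{i−1} + ε for i ≥ 1. Suppose x⁽⁰⁾ satisfies ⟨∇f(x⁽⁰⁾), x⁽⁰⁾⟩ = 0, and for i = 1,…,k define x⁽ⁱ⁾ = α·x⁽ⁱ⁻¹⁾ − ε·δ⁽ⁱ⁻¹⁾, where δ⁽ⁱ⁻¹⁾ satisfies g(δ⁽ⁱ⁻¹⁾) ≤ 1 and ⟨∇f(x⁽ⁱ⁻¹⁾), δ⁽ⁱ⁻¹⁾⟩ = g*(∇f(x⁽ⁱ⁻¹⁾)). Then the duality gap at step k obeys the exact recursion: ⟨∇f(x⁽ᵏ⁾), x⁽ᵏ⁾⟩ + t_k·g*(∇f(x⁽ᵏ⁾)) = Σ_{i=1}^k α^{k−i}·⟨∇f(x⁽ⁱ⁾) − ∇f(x⁽ⁱ⁻¹⁾),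 x⁽ⁱ⁾⟩ + Σ_{i=1}^k α^{k−i}·t_i·(g*(∇f(x⁽ⁱ⁾)) − g*(∇f(x⁽ⁱ⁻¹⁾))). -/
open scoped RealInnerProductSpace BigOperators

/-- The exact telescoping recursion for the duality gap of the shrunken stagewise iterates,
used in the proof of Theorem 2. -/
theorem shrunken_stagewise_duality_gap_recursion {n : ℕ}
    (f : EuclideanSpace ℝ (Fin n) → ℝ)
    (f' : EuclideanSpace ℝ (Fin n) → EuclideanSpace ℝ (Fin n))
    (hf_diff : ∀ x, HasGradientAt f (f' x) x)
    (g : EuclideanSpace ℝ (Fin n) → ℝ)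
    (hg_add : ∀ x y, g (x + y) ≤ g x + g y)
    (hg_smul : ∀ (a : ℝ) (x : EuclideanSpace ℝ (Fin n)), g (a • x) = |a| * g x)
    (hg_zero : ∀ x, g x = 0 → x = 0)
    (gs : EuclideanSpace ℝ (Fin n) → ℝ)
    (hgs : ∀ v, gs v = sSup {r : ℝ | ∃ z, g z ≤ 1 ∧ ⟪v, z⟫ = r})
    (ε : ℝ) (hε : 0 < ε)
    (α : ℝ) (hα₀ : 0 < α) (hα₁ : α ≤ 1)
    (t : ℕ → ℝ) (ht0 : t 0 = 0) (htrec : ∀ i : ℕ, t (i + 1) = α * t i + ε)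
    (k : ℕ)
    (x : ℕ → EuclideanSpace ℝ (Fin n)) (δ : ℕ → EuclideanSpace ℝ (Fin n))
    (hx0_gap : ⟪f' (x 0), x 0⟫ = 0)
    (hupd : ∀ i, 1 ≤ i → i ≤ k → x i = α • x (i - 1) - ε • δ (i - 1))
    (hδ_feas : ∀ i, 1 ≤ i → i ≤ k → g (δ (i - 1)) ≤ 1)
    (hδ_max : ∀ i, 1 ≤ i → i ≤ k →
      ⟪f' (x (i - 1)), δ (i - 1)⟫ = gs (f' (x (i - 1)))) :
    ⟪f' (x k), x k⟫ + t k * gs (f' (x k)) =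
      (∑ i ∈ Finset.Icc 1 k, α ^ (k - i) * ⟪f' (x i) - f' (x (i - 1)), x i⟫) +
      ∑ i ∈ Finset.Icc 1 k,
        α ^ (k - i) * (t i * (gs (f' (x i)) - gs (f' (x (i - 1))))) := by
  induction k with
  | zero => simp [ht0, hx0_gap]
  | succ k ih =>
    have ih' := ih (fun i h1 h2 => hupd i h1 (h2.trans (Nat.le_succ k)))
      (fun i h1 h2 => hδ_feas i h1 (h2.trans (Nat.le_succ k)))
      (fun i h1 h2 => hδ_max i h1 (h2.trans (Nat.le_succ k)))
    have hx : x (k + 1) = α • x k - ε • δ k := by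
      simpa using hupd (k + 1) (by omega) le_rfl
    have hδm : ⟪f' (x k), δ k⟫ = gs (f' (x k)) := by
      simpa using hδ_max (k + 1) (by omega) le_rfl
    have hsum : ∀ a : ℕ → ℝ,
        (∑ i ∈ Finset.Icc 1 (k + 1), α ^ (k + 1 - i) * a i) =
          α * (∑ i ∈ Finset.Icc 1 k, α ^ (k - i) * a i) + a (k + 1) := by
      intro a
      rw [Finset.sum_Icc_succ_top (by omega), Finset.mul_sum]
      simp only [Nat.sub_self, pow_zero, one_mul]
      congr 1
      apply Finset.sum_congr rfl
      intro i hi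
      rw [Finset.mem_Icc] at hi
      rw [show k + 1 - i = (k - i) + 1 by omega, pow_succ]
      ring
    rw [hsum, hsum]
    have hinner : ⟪f' (x k), x (k + 1)⟫ = α * ⟪f' (x k), x k⟫ - ε * gs (f' (x k)) := by
      rw [hx, inner_sub_right, real_inner_smul_right, real_inner_smul_right, hδm]
    have hsplit : ⟪f' (x (k + 1)), x (k + 1)⟫ =
        ⟪f' (x (k + 1)) - f' (x k), x (k + 1)⟫ + ⟪f' (x k), x (k + 1)⟫ := by
      rw [inner_sub_left]; ring
    rw [hsplit, hinner, htrec, Nat.add_sub_cancel]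
    have := htrec k
    linear_combination α * ih'
end

section
/- Fix t > 0. In the joint limit as ε → 0⁺ and M → ∞ (i.e., along the product of the filter of punctured right neighborhoods of 0 in ε and the at-infinity filter in M), the following two limits hold: (i) ε·log(1 − 1/M)/log(1 − ε/(M·t)) → t, and (ii) M·(ε·log(1 − 1/M)/log(1 − ε/(M·t)) − t) → t/2. -/
open Filter Topology

lemma gh1 : Tendsto (fun x : ℝ => -Real.log (1 - x) / x) (𝓝[>] 0) (𝓝 1) := by
  have hlin : HasDerivAt (fun x : ℝ => 1 - x) (-1) 0 := by
    simpa using (hasDerivAt_id (0:ℝ)).const_sub 1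
  have hlog : HasDerivAt (fun x : ℝ => Real.log (1 - x)) (-1) 0 := by
    have := (Real.hasDerivAt_log (by norm_num : (1:ℝ) - 0 ≠ 0)).comp 0 hlin
    simpa [Function.comp_def] using this
  have h : HasDerivAt (fun x : ℝ => -Real.log (1 - x)) 1 0 := by
    simpa [Pi.neg_def] using hlog.neg
  have := hasDerivAt_iff_tendsto_slope.mp h
  have h2 := this.mono_left (nhdsWithin_mono 0 (by intro x hx; exact ne_of_gt hx))
  refine h2.congr (fun x => ?_)
  simp [slope_def_field, div_eq_mul_inv]

lemma gh2 : Tendsto (fun x : ℝ => (-Real.log (1 - x) / x - 1) / x) (𝓝[>] 0) (𝓝 (1/2)) := by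
  have hL : Tendsto (fun x : ℝ => Real.log (1 - x)) (𝓝 0) (𝓝 0) := by
    have h1 : Tendsto (fun x : ℝ => 1 - x) (𝓝 0) (𝓝 1) := by
      simpa using (tendsto_const_nhds.sub tendsto_id : Tendsto (fun x:ℝ => 1 - x) (𝓝 0) (𝓝 ((1:ℝ)-0)))
    have := (Real.continuousAt_log (by norm_num : (1:ℝ) ≠ 0)).tendsto.comp h1
    simpa [Function.comp_def] using this
  have key : Tendsto (fun x : ℝ => (-Real.log (1 - x) - x) / x ^ 2) (𝓝[>] 0) (𝓝 (1/2)) := by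
    apply HasDerivAt.lhopital_zero_nhdsGT
      (f' := fun x => 1 / (1 - x) - 1) (g' := fun x => 2 * x)
    · filter_upwards [Ioo_mem_nhdsGT_of_mem (by norm_num : (0:ℝ) ∈ Set.Ico 0 (1/2))]
        with x hx
      have h1x : (1:ℝ) - x ≠ 0 := by nlinarith [hx.1, hx.2]
      have hlin : HasDerivAt (fun y : ℝ => 1 - y) (-1) x := by
        simpa using (hasDerivAt_id x).const_sub 1
      have hlog := (Real.hasDerivAt_log h1x).comp x hlin
      have : HasDerivAt (fun x : ℝ => -Real.log (1 - x) - x) (-((1 - x)⁻¹ * -1) - 1) x :=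
        (hlog.neg.sub (hasDerivAt_id x))
      convert this using 1
      field_simp
    · filter_upwards with x
      simpa using hasDerivAt_pow 2 x
    · filter_upwards [self_mem_nhdsWithin] with x (hx : 0 < x)
      positivity
    · have := (hL.neg.sub tendsto_id)
      simpa using this.mono_left nhdsWithin_le_nhds
    · have : Tendsto (fun x : ℝ => x ^ 2) (𝓝 0) (𝓝 ((0:ℝ) ^ 2)) := (continuous_pow 2).continuousAt.tendsto
      simpa using this.mono_left nhdsWithin_le_nhds
    · have hcong : ∀ᶠ x in 𝓝[>] (0:ℝ), 1 / (2 * (1 - x)) = (1 / (1 - x) - 1) / (2 * x) := by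
        filter_upwards [Ioo_mem_nhdsGT_of_mem (by norm_num : (0:ℝ) ∈ Set.Ico 0 (1/2))]
          with x hx
        have h1x : (1:ℝ) - x ≠ 0 := by nlinarith [hx.1, hx.2]
        have hx0 : x ≠ 0 := ne_of_gt hx.1
        field_simp
        ring
      have : Tendsto (fun x : ℝ => 1 / (2 * (1 - x))) (𝓝 0) (𝓝 (1 / (2 * (1 - 0)))) := by
        apply Tendsto.div tendsto_const_nhds
        · exact (tendsto_const_nhds.mul (tendsto_const_nhds.sub tendsto_id))
        · norm_num
      refine Tendsto.congr' hcong ?_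
      have h2 := this.mono_left (nhdsWithin_le_nhds (s := Set.Ioi (0:ℝ)))
      convert h2 using 2
      norm_num
  refine key.congr' ?_
  filter_upwards [self_mem_nhdsWithin] with x (hx : 0 < x)
  have hx0 : x ≠ 0 := ne_of_gt hx
  rw [pow_two]
  field_simp

/-- Lemma A.1 of the paper: limits of `ε·log(1 − 1/M)/log(1 − ε/(Mt))` as `ε → 0⁺`
and `M → ∞` jointly. -/
theorem shrunken_stagewise_log_limits (t : ℝ) (ht : 0 < t) :
    Tendsto
      (fun p : ℝ × ℝ =>
        p.1 * Real.log (1 - 1 / p.2) / Real.log (1 - p.1 / (p.2 * t)))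
      ((𝓝[>] (0 : ℝ)) ×ˢ atTop) (𝓝 t) ∧
    Tendsto
      (fun p : ℝ × ℝ =>
        p.2 * (p.1 * Real.log (1 - 1 / p.2) / Real.log (1 - p.1 / (p.2 * t)) - t))
      ((𝓝[>] (0 : ℝ)) ×ˢ atTop) (𝓝 (t / 2)) := by
  set F := (𝓝[>] (0 : ℝ)) ×ˢ (atTop : Filter ℝ) with hF
  set G := fun x : ℝ => -Real.log (1 - x) / x with hG
  have ht' : t ≠ 0 := ne_of_gt ht
  -- eventual bounds
  have e1 : ∀ᶠ x : ℝ in 𝓝[>] 0, 0 < x ∧ x < t := by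
    filter_upwards [Ioo_mem_nhdsGT_of_mem (⟨le_refl 0, ht⟩ : (0:ℝ) ∈ Set.Ico 0 t)] with x hx
    exact ⟨hx.1, hx.2⟩
  have hev : ∀ᶠ p : ℝ × ℝ in F, (0 < p.1 ∧ p.1 < t) ∧ 1 < p.2 :=
    ((tendsto_fst : Tendsto Prod.fst F (𝓝[>] 0)).eventually e1).and
      ((tendsto_snd : Tendsto Prod.snd F atTop).eventually (eventually_gt_atTop (1:ℝ)))
  -- basic tendsto facts
  have tend1 : Tendsto (fun p : ℝ × ℝ => 1 / p.2) F (𝓝[>] 0) := by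
    rw [tendsto_nhdsWithin_iff]
    constructor
    · simpa [one_div, Function.comp_def] using tendsto_inv_atTop_zero.comp (tendsto_snd : Tendsto Prod.snd F atTop)
    · filter_upwards [hev] with p hp
      have : (0:ℝ) < p.2 := lt_trans one_pos hp.2
      exact Set.mem_Ioi.mpr (by positivity)
  have tendu : Tendsto (fun p : ℝ × ℝ => p.1 / (p.2 * t)) F (𝓝[>] 0) := by
    rw [tendsto_nhdsWithin_iff]
    constructor
    · have h1 : Tendsto (fun p : ℝ × ℝ => p.1) F (𝓝 0) :=
        (tendsto_fst.mono_right nhdsWithin_le_nhds)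
      have h2 : Tendsto (fun p : ℝ × ℝ => (p.2 * t)⁻¹) F (𝓝 0) := by
        exact tendsto_inv_atTop_zero.comp ((tendsto_snd : Tendsto Prod.snd F atTop).atTop_mul_const ht)
      have := h1.mul h2
      simpa [div_eq_mul_inv] using this
    · filter_upwards [hev] with p hp
      have h2 : (0:ℝ) < p.2 := lt_trans one_pos hp.2
      exact Set.mem_Ioi.mpr (div_pos hp.1.1 (mul_pos h2 ht))
  have ta : Tendsto (fun p : ℝ × ℝ => G (1 / p.2)) F (𝓝 1) := gh1.comp tend1
  have tb : Tendsto (fun p : ℝ × ℝ => G (p.1 / (p.2 * t))) F (𝓝 1) := gh1.comp tendu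
  have ta2 : Tendsto (fun p : ℝ × ℝ => (G (1 / p.2) - 1) / (1 / p.2)) F (𝓝 (1/2)) := gh2.comp tend1
  have tb2 : Tendsto (fun p : ℝ × ℝ => (G (p.1 / (p.2 * t)) - 1) / (p.1 / (p.2 * t))) F (𝓝 (1/2)) :=
    gh2.comp tendu
  have hbpos : ∀ᶠ p : ℝ × ℝ in F, (1:ℝ)/2 < G (p.1 / (p.2 * t)) :=
    tb.eventually (eventually_gt_nhds (by norm_num))
  -- log nonzero facts eventually
  have hlogs : ∀ᶠ p : ℝ × ℝ in F, Real.log (1 - p.1 / (p.2 * t)) ≠ 0 ∧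
      p.1 ≠ 0 ∧ p.2 ≠ 0 := by
    filter_upwards [hev] with p hp
    have h2 : (0:ℝ) < p.2 := lt_trans one_pos hp.2
    have hu0 : 0 < p.1 / (p.2 * t) := div_pos hp.1.1 (mul_pos h2 ht)
    have hu1 : p.1 / (p.2 * t) < 1 := by
      rw [div_lt_one (by positivity)]
      nlinarith [hp.1.2, hp.2, ht]
    refine ⟨ne_of_lt (Real.log_neg (by linarith) (by linarith)), ne_of_gt hp.1.1, ne_of_gt h2⟩
  -- key eventual identity (i)
  have hkey1 : ∀ᶠ p : ℝ × ℝ in F,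
      t * G (1 / p.2) / G (p.1 / (p.2 * t)) =
      p.1 * Real.log (1 - 1 / p.2) / Real.log (1 - p.1 / (p.2 * t)) := by
    filter_upwards [hlogs] with p ⟨hL2, hp1, hp2⟩
    simp only [hG]
    set L1 := Real.log (1 - 1 / p.2) with hL1def
    set L2 := Real.log (1 - p.1 / (p.2 * t)) with hL2def
    field_simp
  have part1 : Tendsto
      (fun p : ℝ × ℝ =>
        p.1 * Real.log (1 - 1 / p.2) / Real.log (1 - p.1 / (p.2 * t))) F (𝓝 t) := by
    have h0 := (ta.const_mul t).div tb one_ne_zero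
    rw [show t * 1 / 1 = t by ring] at h0
    exact Tendsto.congr' hkey1 h0
  refine ⟨part1, ?_⟩
  -- part (ii)
  have tp1t : Tendsto (fun p : ℝ × ℝ => p.1 / t) F (𝓝 0) := by
    simpa using (tendsto_fst.mono_right nhdsWithin_le_nhds : Tendsto (fun p : ℝ × ℝ => p.1) F (𝓝 0)).div_const t
  have comb : Tendsto (fun p : ℝ × ℝ =>
      t * ((G (1 / p.2) - 1) / (1 / p.2) -
        ((G (p.1 / (p.2 * t)) - 1) / (p.1 / (p.2 * t))) * (p.1 / t)) / G (p.1 / (p.2 * t)))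
      F (𝓝 (t * (1/2 - 1/2 * 0) / 1)) := by
    exact ((ta2.sub (tb2.mul tp1t)).const_mul t).div tb one_ne_zero
  have hkey2 : ∀ᶠ p : ℝ × ℝ in F,
      t * ((G (1 / p.2) - 1) / (1 / p.2) -
        ((G (p.1 / (p.2 * t)) - 1) / (p.1 / (p.2 * t))) * (p.1 / t)) / G (p.1 / (p.2 * t)) =
      p.2 * (p.1 * Real.log (1 - 1 / p.2) / Real.log (1 - p.1 / (p.2 * t)) - t) := by
    filter_upwards [hlogs] with p ⟨hL2, hp1, hp2⟩
    simp only [hG]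
    set L1 := Real.log (1 - 1 / p.2) with hL1def
    set L2 := Real.log (1 - p.1 / (p.2 * t)) with hL2def
    field_simp
    ring
  have h := comb.congr' hkey2
  rw [show t * (1/2 - 1/2 * 0) / 1 = t / 2 by ring] at h
  exact h
end
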